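/- arXiv:1408.2639 — 4 statements merged into one kernel-verified Lean document; each statement's English description precedes it below -/
import Mathlib

section
/- Let A be a Δ-implication class of an edge-labelled graph G such that for every (u,v) ∈ A, uv is an overlap edge. Then span(A) induces a clique in G. -/
/-!
Graphs here are finite, undirected, without parallel edges, and have a loop at
every vertex.  We model them as symmetric reflexive relations.
-/

structure LoopGraph (V : Type) where
  Adj : V → V → Prop
  symm : ∀ u v, Adj u v → Adj v u
  refl : ∀ u, Adj u u

namespace LoopGraph

variable {V W : Type}

/-- Closed neighbourhood `N[u]`. -/
def nbhd (G : LoopGraph V) (u : V) : Set V := {v | G.Adj u v}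

/-- `u` is a universal vertex. -/
def Universal (G : LoopGraph V) (u : V) : Prop := ∀ v, G.Adj u v

/-- `u ≠ v` are true twins if `N[u] = N[v]`. -/
def TrueTwins (G : LoopGraph V) (u v : V) : Prop := u ≠ v ∧ G.nbhd u = G.nbhd v

/-- `uv` is an inclusion edge: it is an edge and `N[u] ⊆ N[v]` or `N[v] ⊆ N[u]`. -/
def InclusionEdge (G : LoopGraph V) (u v : V) : Prop :=
  G.Adj u v ∧ (G.nbhd u ⊆ G.nbhd v ∨ G.nbhd v ⊆ G.nbhd u)

/-- `u` overlaps `v`: they are adjacent and their closed neighbourhoods are incomparable. -/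
def Overlaps (G : LoopGraph V) (u v : V) : Prop :=
  G.Adj u v ∧ ¬ G.nbhd u ⊆ G.nbhd v ∧ ¬ G.nbhd v ⊆ G.nbhd u

/-- `{u,v}` is a spanning pair. -/
def SpanningPair (G : LoopGraph V) (u v : V) : Prop :=
  (∀ x, ¬ G.Adj v x → G.nbhd x ⊆ G.nbhd u) ∧
  (∀ y, ¬ G.Adj u y → G.nbhd y ⊆ G.nbhd v)

/-- `uv` is a 2-overlap edge: an overlap edge forming a spanning pair. -/
def TwoOverlapEdge (G : LoopGraph V) (u v : V) : Prop :=
  G.Overlaps u v ∧ G.SpanningPair u v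

/-- `uv` is a 1-overlap edge: an overlap edge not forming a spanning pair. -/
def OneOverlapEdge (G : LoopGraph V) (u v : V) : Prop :=
  G.Overlaps u v ∧ ¬ G.SpanningPair u v

/-- `{u,v}` is a circular pair: a non-adjacent spanning pair. -/
def CircularPair (G : LoopGraph V) (u v : V) : Prop :=
  G.SpanningPair u v ∧ ¬ G.Adj u v

/-- Every vertex belongs to some circular pair. -/
def CircularlyPaired (G : LoopGraph V) : Prop := ∀ u, ∃ v, G.CircularPair u v

/-- A walk with `k` edges: vertices `P 0, …, P k` with consecutive vertices adjacent. -/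
def IsWalk (G : LoopGraph V) (k : ℕ) (P : ℕ → V) : Prop :=
  ∀ i < k, G.Adj (P i) (P (i + 1))

/-- Vertex `z` avoids the edge `ab`: every neighbour of `z` among `a, b` overlaps `z`,
and if `z` overlaps both `a` and `b` then `a, b` do not overlap each other. -/
def AvoidsEdge (G : LoopGraph V) (z a b : V) : Prop :=
  (G.Adj z a → G.Overlaps z a) ∧ (G.Adj z b → G.Overlaps z b) ∧
  (G.Overlaps z a → G.Overlaps z b → ¬ G.Overlaps a b)

/-- Vertex `z` and the walk `P` (with `k` edges) avoid each other. -/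
def AvoidsWalk (G : LoopGraph V) (z : V) (k : ℕ) (P : ℕ → V) : Prop :=
  (∀ i ≤ k, G.Adj z (P i) → G.Overlaps z (P i)) ∧
  (∀ i < k, G.Overlaps z (P i) → G.Overlaps z (P (i + 1)) →
    ¬ G.Overlaps (P i) (P (i + 1)))

/-- The walks `P` and `Q` (both with `k` edges) avoid each other. -/
def WalksAvoid (G : LoopGraph V) (k : ℕ) (P Q : ℕ → V) : Prop :=
  ∀ i < k, G.AvoidsEdge (P i) (Q i) (Q (i + 1)) ∧ G.AvoidsEdge (Q (i + 1)) (P i) (P (i + 1))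

/-- `{x,y}` is a `z`-invertible pair, i.e. an invertible pair anchored at `z`. -/
def ZInvertiblePair (G : LoopGraph V) (z x y : V) : Prop :=
  x ≠ y ∧ x ≠ z ∧ y ≠ z ∧
  ∃ k, ∃ P Q : ℕ → V, G.IsWalk k P ∧ G.IsWalk k Q ∧
    P 0 = x ∧ P k = y ∧ Q 0 = y ∧ Q k = x ∧
    G.WalksAvoid k P Q ∧ G.AvoidsWalk z k P ∧ G.AvoidsWalk z k Q

/-- `G` contains an anchored invertible pair. -/
def HasAnchoredInvertiblePair (G : LoopGraph V) : Prop :=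
  ∃ z x y, G.ZInvertiblePair z x y

end LoopGraph

/-!
Circular arcs: the circle is modelled as the half-open interval `[0,1)`;
an arc is described by its left and right endpoints (clockwise = increasing),
wrapping around if necessary.
-/

/-- Membership of the point `t` in the clockwise arc from `l` to `r`. -/
def arcMem (l r t : ℝ) : Prop :=
  (l ≤ r ∧ l ≤ t ∧ t ≤ r) ∨ (r < l ∧ (l ≤ t ∨ t ≤ r))

/-- The arc `[l₁,r₁]` is contained in the arc `[l₂,r₂]`. -/
def arcSubset (l₁ r₁ l₂ r₂ : ℝ) : Prop :=
  ∀ t ∈ Set.Ico (0 : ℝ) 1, arcMem l₁ r₁ t → arcMem l₂ r₂ t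

/-- The arc `[lu,ru]` properly contains the arc `[lv,rv]`. -/
def arcProperContains (lu ru lv rv : ℝ) : Prop :=
  arcSubset lv rv lu ru ∧ ¬ arcSubset lu ru lv rv

/-- The arcs `[lu,ru]` and `[lv,rv]` together cover the whole circle. -/
def arcsCover (lu ru lv rv : ℝ) : Prop :=
  ∀ t ∈ Set.Ico (0 : ℝ) 1, arcMem lu ru t ∨ arcMem lv rv t

/-- `b` lies strictly between `a` and `c` in the clockwise cyclic order on `[0,1)`. -/
def cycBtw (a b c : ℝ) : Prop :=
  (a < b ∧ b < c) ∨ (b < c ∧ c < a) ∨ (c < a ∧ a < b)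

/-- The four points `a, b, c, d` of `[0,1)` occur in this clockwise cyclic order. -/
def cyc4 (a b c d : ℝ) : Prop := cycBtw a b c ∧ cycBtw a c d

namespace LoopGraph

variable {V W : Type}

/-- `(l, r)` is a circular-arc representation of `G`: all endpoints are distinct and
two vertices are adjacent iff their arcs intersect. -/
def IsCARep (G : LoopGraph V) (l r : V → ℝ) : Prop :=
  (∀ v, l v ∈ Set.Ico (0 : ℝ) 1) ∧ (∀ v, r v ∈ Set.Ico (0 : ℝ) 1) ∧
  Function.Injective (Sum.elim l r) ∧
  ∀ u v, (G.Adj u v ↔ ∃ t ∈ Set.Ico (0 : ℝ) 1,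
    arcMem (l u) (r u) t ∧ arcMem (l v) (r v) t)

/-- `G` is a circular-arc graph. -/
def IsCircularArc (G : LoopGraph V) : Prop := ∃ l r : V → ℝ, G.IsCARep l r

/-- A normalized circular-arc representation of `G`. -/
def IsNormalizedRep (G : LoopGraph V) (l r : V → ℝ) : Prop :=
  G.IsCARep l r ∧
  ∀ u v, G.Adj u v → u ≠ v →
    (arcProperContains (l u) (r u) (l v) (r v) ↔ G.nbhd v ⊆ G.nbhd u) ∧
    (arcsCover (l u) (r u) (l v) (r v) ↔ G.TwoOverlapEdge u v)

/-- A circular-arc representation of the induced subgraph `G[X]` which is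
normalized with respect to `G`. -/
def IsNormalizedRepOn (G : LoopGraph V) (X : Set V) (l r : V → ℝ) : Prop :=
  (∀ v ∈ X, l v ∈ Set.Ico (0 : ℝ) 1) ∧ (∀ v ∈ X, r v ∈ Set.Ico (0 : ℝ) 1) ∧
  Set.InjOn l X ∧ Set.InjOn r X ∧ (∀ u ∈ X, ∀ v ∈ X, l u ≠ r v) ∧
  (∀ u ∈ X, ∀ v ∈ X,
    (G.Adj u v ↔ ∃ t ∈ Set.Ico (0 : ℝ) 1,
      arcMem (l u) (r u) t ∧ arcMem (l v) (r v) t)) ∧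
  (∀ u ∈ X, ∀ v ∈ X, G.Adj u v → u ≠ v →
    (arcProperContains (l u) (r u) (l v) (r v) ↔ G.nbhd v ⊆ G.nbhd u) ∧
    (arcsCover (l u) (r u) (l v) (r v) ↔ G.TwoOverlapEdge u v))

/-! Circular completions. -/

/-- `f` exhibits `G` as an induced subgraph of `H`. -/
def InducedEmb (G : LoopGraph V) (H : LoopGraph W) (f : V → W) : Prop :=
  Function.Injective f ∧ ∀ u v, (G.Adj u v ↔ H.Adj (f u) (f v))

/-- Every edge of `G` has the same type (inclusion / 1-overlap / 2-overlap)
in `G` and in `H`. -/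
def SameEdgeTypes (G : LoopGraph V) (H : LoopGraph W) (f : V → W) : Prop :=
  ∀ u v, G.Adj u v →
    ((G.InclusionEdge u v ↔ H.InclusionEdge (f u) (f v)) ∧
     (G.OneOverlapEdge u v ↔ H.OneOverlapEdge (f u) (f v)) ∧
     (G.TwoOverlapEdge u v ↔ H.TwoOverlapEdge (f u) (f v)))

/-- `H` (with embedding `f`) is a circular completion of `G`: a circularly-paired
graph with the fewest possible vertices containing `G` as an induced subgraph with
all edge types preserved. -/
def IsCircularCompletion (G : LoopGraph V) (H : LoopGraph W) (f : V → W) : Prop :=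
  Finite W ∧ G.InducedEmb H f ∧ G.SameEdgeTypes H f ∧ H.CircularlyPaired ∧
  ∀ (W' : Type) (H' : LoopGraph W') (f' : V → W'), Finite W' →
    G.InducedEmb H' f' → G.SameEdgeTypes H' f' → H'.CircularlyPaired →
    Nat.card W ≤ Nat.card W'

/-! The anchored Δ-knotting graph. -/

/-- `A(z)`: vertices nonadjacent to `z` or overlapping `z`. -/
def Aset (G : LoopGraph V) (z : V) : Set V := {u | ¬ G.Adj z u ∨ G.Overlaps z u}

/-- `x` and `y` are `uz`-connected. -/
def UZConnected (G : LoopGraph V) (u z x y : V) : Prop :=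
  ¬ G.InclusionEdge x u ∧ ¬ G.InclusionEdge y u ∧ ¬ G.InclusionEdge x z ∧
  ¬ G.InclusionEdge y z ∧ ¬ G.InclusionEdge u z ∧
  ∃ k, ∃ P : ℕ → V, G.IsWalk k P ∧ P 0 = x ∧ P k = y ∧
    G.AvoidsWalk u k P ∧ G.AvoidsWalk z k P

/-- `X` is a `uz`-component: a maximal set of pairwise `uz`-connected vertices. -/
def IsUZComponent (G : LoopGraph V) (u z : V) (X : Set V) : Prop :=
  X.Nonempty ∧ (∀ x ∈ X, ∀ y ∈ X, G.UZConnected u z x y) ∧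
  ∀ Y : Set V, X ⊆ Y → (∀ x ∈ Y, ∀ y ∈ Y, G.UZConnected u z x y) → Y = X

/-- Vertices of the `z`-anchored Δ-knotting graph: copies `(u, X)` of `u ∈ A(z)`,
one for each `uz`-component `X`. -/
def KnotVertex (G : LoopGraph V) (z : V) (p : V × Set V) : Prop :=
  p.1 ∈ G.Aset z ∧ G.IsUZComponent p.1 z p.2

/-- Edges of the `z`-anchored Δ-knotting graph: for each edge `uv` of `G` with
`u, v ∈ A(z)`, an edge between the copy of `u` for `X` and the copy of `v` for `Y`
whenever `v ∈ X` and `u ∈ Y`. -/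
def KnotAdj (G : LoopGraph V) (z : V) (p q : V × Set V) : Prop :=
  G.Adj p.1 q.1 ∧ p.1 ∈ G.Aset z ∧ q.1 ∈ G.Aset z ∧ q.1 ∈ p.2 ∧ p.1 ∈ q.2

/-- The `z`-anchored Δ-knotting graph of `G` is bipartite (it is 2-colourable). -/
def KnotBipartite (G : LoopGraph V) (z : V) : Prop :=
  ∃ c : V × Set V → Bool, ∀ p q, G.KnotVertex z p → G.KnotVertex z q →
    G.KnotAdj z p q → c p ≠ c q

/-! Non-inverting sets. -/

/-- `X` is a non-inverting set of `G`. -/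
def NonInvertingSet (G : LoopGraph V) (X : Set V) : Prop :=
  (∀ u ∈ X, ∀ v ∈ X, ¬ G.TwoOverlapEdge u v) ∧
  ¬ ∃ x ∈ X, ∃ y ∈ X, ∃ k, 0 < k ∧ ∃ P Q : ℕ → V,
      G.IsWalk k P ∧ G.IsWalk k Q ∧ (∀ i ≤ k, P i ∈ X) ∧ (∀ i ≤ k, Q i ∈ X) ∧
      P 0 = x ∧ P k = y ∧ Q 0 = y ∧ Q k = x ∧ G.WalksAvoid k P Q

end LoopGraph

/-!
Edge-labelled graphs: graphs (with loops) in which every edge is labelled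
inclusion or overlap, loops being labelled inclusion.
-/

structure ELGraph (V : Type) where
  Adj : V → V → Prop
  symm : ∀ u v, Adj u v → Adj v u
  refl : ∀ u, Adj u u
  /-- `Ovl u v` means the edge `uv` is labelled as an overlap edge. -/
  Ovl : V → V → Prop
  ovl_symm : ∀ u v, Ovl u v → Ovl v u
  ovl_adj : ∀ u v, Ovl u v → Adj u v
  ovl_irrefl : ∀ u, ¬ Ovl u u

namespace ELGraph

variable {V : Type}

/-- Closed neighbourhood `N[u]`. -/
def nbhd (G : ELGraph V) (u : V) : Set V := {v | G.Adj u v}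

/-- `uv` is (labelled as) an inclusion edge. -/
def InclEdge (G : ELGraph V) (u v : V) : Prop := G.Adj u v ∧ ¬ G.Ovl u v

/-- A walk with `k` edges. -/
def IsWalk (G : ELGraph V) (k : ℕ) (P : ℕ → V) : Prop :=
  ∀ i < k, G.Adj (P i) (P (i + 1))

/-- `z` avoids the edge `ab`: every neighbour of `z` among `a, b` overlaps `z`, and if
`z` overlaps both `a` and `b` then the edge `ab` is an inclusion edge. -/
def AvoidsEdge (G : ELGraph V) (z a b : V) : Prop :=
  (G.Adj z a → G.Ovl z a) ∧ (G.Adj z b → G.Ovl z b) ∧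
  (G.Ovl z a → G.Ovl z b → ¬ G.Ovl a b)

/-- The walks `P` and `Q` (both with `k` edges) avoid each other. -/
def WalksAvoid (G : ELGraph V) (k : ℕ) (P Q : ℕ → V) : Prop :=
  ∀ i < k, G.AvoidsEdge (P i) (Q i) (Q (i + 1)) ∧ G.AvoidsEdge (Q (i + 1)) (P i) (P (i + 1))

/-- The ordered pair `p` is related to the ordered pair `q`: there exist a walk from
`p.1` to `q.1` and a walk from `p.2` to `q.2`, of the same (positive) length, that
avoid each other. -/
def Related (G : ELGraph V) (p q : V × V) : Prop :=
  ∃ k, 0 < k ∧ ∃ P Q : ℕ → V, G.IsWalk k P ∧ G.IsWalk k Q ∧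
    P 0 = p.1 ∧ Q 0 = p.2 ∧ P k = q.1 ∧ Q k = q.2 ∧ G.WalksAvoid k P Q

/-- A Δ-implication class: a maximal set of pairwise related ordered pairs. -/
def IsDeltaClass (G : ELGraph V) (A : Set (V × V)) : Prop :=
  A.Nonempty ∧ (∀ p ∈ A, ∀ q ∈ A, G.Related p q) ∧
  ∀ B : Set (V × V), A ⊆ B → (∀ p ∈ B, ∀ q ∈ B, G.Related p q) → B = A

/-- `A⁻¹ = {(u,v) : (v,u) ∈ A}`. -/
def inv (A : Set (V × V)) : Set (V × V) := {p | p.swap ∈ A}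

/-- `span A`: the set of vertices incident to pairs of `A`. -/
def span (A : Set (V × V)) : Set V := {v | ∃ p ∈ A, v = p.1 ∨ v = p.2}

/-- `S` induces a clique. -/
def IsClique (G : ELGraph V) (S : Set V) : Prop := ∀ a ∈ S, ∀ b ∈ S, G.Adj a b

/-- A Δ-module. -/
def IsDeltaModule (G : ELGraph V) (S : Set V) : Prop :=
  S.Nonempty ∧
  (∀ x, x ∉ S →
    ((∀ s ∈ S, ¬ G.Adj x s) ∨ (∀ s ∈ S, G.InclEdge x s) ∨ (∀ s ∈ S, G.Ovl x s))) ∧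
  (¬ G.IsClique S → ∀ x, x ∉ S → ∀ s ∈ S, ¬ G.Ovl x s)

/-- A trivial Δ-module: the whole vertex set or a single vertex. -/
def TrivialModule (S : Set V) : Prop := S = Set.univ ∨ ∃ a : V, S = {a}

/-- `{a,b}` is a Δ-invertible pair: `(a,b)` is related to `(b,a)`. -/
def DeltaInvertiblePair (G : ELGraph V) (a b : V) : Prop := G.Related (a, b) (b, a)

/-- An interval ordering of an edge-labelled graph. -/
def IsIntervalOrdering (G : ELGraph V) (lt : V → V → Prop) : Prop :=
  IsStrictTotalOrder V lt ∧
  ¬ ∃ a b c, lt a b ∧ lt b c ∧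
    ((¬ G.Adj a b ∧ G.Adj a c) ∨
     (G.InclEdge a b ∧ ¬ G.Adj a c ∧ G.Adj b c) ∨
     (G.Ovl a b ∧ G.Adj a c ∧ ¬ G.Adj b c) ∨
     (G.Ovl a b ∧ G.Ovl b c ∧ G.InclEdge a c) ∨
     (G.InclEdge a b ∧ G.InclEdge b c ∧ G.Ovl a c))

/-- An interval representation of `G` consistent with its labelling. -/
def IsConsistentIntervalRep (G : ELGraph V) (l r : V → ℝ) : Prop :=
  (∀ v, l v ≤ r v) ∧
  (∀ u v, (G.Adj u v ↔ (Set.Icc (l u) (r u) ∩ Set.Icc (l v) (r v)).Nonempty)) ∧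
  (∀ u v, (G.Ovl u v ↔
    ((Set.Icc (l u) (r u) ∩ Set.Icc (l v) (r v)).Nonempty ∧
     ¬ Set.Icc (l u) (r u) ⊆ Set.Icc (l v) (r v) ∧
     ¬ Set.Icc (l v) (r v) ⊆ Set.Icc (l u) (r u))))

/-- A consistently edge-labelled graph: there is a transitive orientation `D` of its
inclusion edges (between distinct vertices) such that `D u v → N[v] ⊆ N[u]`. -/
def ConsistentlyLabelled (G : ELGraph V) : Prop :=
  ∃ D : V → V → Prop,
    (∀ u v, D u v → u ≠ v ∧ G.InclEdge u v) ∧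
    (∀ u v, u ≠ v → G.InclEdge u v → (D u v ↔ ¬ D v u)) ∧
    (∀ u v w, D u v → D v w → D u w) ∧
    (∀ u v, D u v → G.nbhd v ⊆ G.nbhd u)

end ELGraph
namespace ELGraph

variable {V : Type}

lemma related_trans {G : ELGraph V} {p q r : V × V}
    (h1 : G.Related p q) (h2 : G.Related q r) : G.Related p r := by
  obtain ⟨k1, hk1, P1, Q1, hP1, hQ1, hP10, hQ10, hP1k, hQ1k, hW1⟩ := h1
  obtain ⟨k2, hk2, P2, Q2, hP2, hQ2, hP20, hQ20, hP2k, hQ2k, hW2⟩ := h2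
  have ePP : P1 k1 = P2 0 := by rw [hP1k, hP20]
  have eQQ : Q1 k1 = Q2 0 := by rw [hQ1k, hQ20]
  refine ⟨k1 + k2, by omega,
    (fun n => if n ≤ k1 then P1 n else P2 (n - k1)),
    (fun n => if n ≤ k1 then Q1 n else Q2 (n - k1)), ?_, ?_, ?_, ?_, ?_, ?_, ?_⟩
  · intro n hn
    rcases Nat.lt_trichotomy n k1 with h | h | h
    · simp only [if_pos h.le, if_pos (by omega : n + 1 ≤ k1)]
      exact hP1 n h
    · subst h
      simp only [if_pos le_rfl, if_neg (by omega : ¬ n + 1 ≤ n),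
        (by omega : n + 1 - n = 1), ePP]
      exact hP2 0 (by omega)
    · simp only [if_neg (by omega : ¬ n ≤ k1), if_neg (by omega : ¬ n + 1 ≤ k1),
        (by omega : n + 1 - k1 = (n - k1) + 1)]
      exact hP2 (n - k1) (by omega)
  · intro n hn
    rcases Nat.lt_trichotomy n k1 with h | h | h
    · simp only [if_pos h.le, if_pos (by omega : n + 1 ≤ k1)]
      exact hQ1 n h
    · subst h
      simp only [if_pos le_rfl, if_neg (by omega : ¬ n + 1 ≤ n),
        (by omega : n + 1 - n = 1), eQQ]
      exact hQ2 0 (by omega)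
    · simp only [if_neg (by omega : ¬ n ≤ k1), if_neg (by omega : ¬ n + 1 ≤ k1),
        (by omega : n + 1 - k1 = (n - k1) + 1)]
      exact hQ2 (n - k1) (by omega)
  · simpa using hP10
  · simpa using hQ10
  · simp only [if_neg (by omega : ¬ k1 + k2 ≤ k1), (by omega : k1 + k2 - k1 = k2)]
    exact hP2k
  · simp only [if_neg (by omega : ¬ k1 + k2 ≤ k1), (by omega : k1 + k2 - k1 = k2)]
    exact hQ2k
  · intro n hn
    rcases Nat.lt_trichotomy n k1 with h | h | h
    · simp only [if_pos h.le, if_pos (by omega : n + 1 ≤ k1)]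
      exact hW1 n h
    · subst h
      simp only [if_pos le_rfl, if_neg (by omega : ¬ n + 1 ≤ n),
        (by omega : n + 1 - n = 1), ePP, eQQ]
      exact hW2 0 (by omega)
    · simp only [if_neg (by omega : ¬ n ≤ k1), if_neg (by omega : ¬ n + 1 ≤ k1),
        (by omega : n + 1 - k1 = (n - k1) + 1)]
      exact hW2 (n - k1) (by omega)

lemma mem_of_related {G : ELGraph V} {A : Set (V × V)} (hA : G.IsDeltaClass A)
    {z s t : V × V} (hs : s ∈ A) (ht : t ∈ A)
    (h1 : G.Related s z) (h2 : G.Related z t) : z ∈ A := by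
  obtain ⟨hne, hrel, hmax⟩ := hA
  have key : ∀ p ∈ A, G.Related p z := fun p hp =>
    related_trans (hrel p hp s hs) h1
  have key2 : ∀ p ∈ A, G.Related z p := fun p hp =>
    related_trans h2 (hrel t ht p hp)
  have hzz : G.Related z z := related_trans h2 (key t ht)
  have heq := hmax (insert z A) (Set.subset_insert _ _) ?_
  · rw [← heq]; exact Set.mem_insert _ _
  · intro p hp q hq
    rcases Set.mem_insert_iff.mp hp with hp1 | hp1 <;>
      rcases Set.mem_insert_iff.mp hq with hq1 | hq1
    · subst hp1; subst hq1; exact hzz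
    · subst hp1; exact key2 q hq1
    · subst hq1; exact key p hp1
    · exact hrel p hp1 q hq1

/-- One-step relatedness. -/
lemma step1 {G : ELGraph V} {x x' y y' : V}
    (hxx : G.Adj x x') (hyy : G.Adj y y')
    (h1 : G.AvoidsEdge x y y') (h2 : G.AvoidsEdge y' x x') :
    G.Related (x, y) (x', y') := by
  refine ⟨1, one_pos, (fun n => if n = 0 then x else x'),
    (fun n => if n = 0 then y else y'), ?_, ?_, by simp, by simp, by simp, by simp, ?_⟩
  · intro n hn
    have : n = 0 := by omega
    subst this; simpa using hxx
  · intro n hn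
    have : n = 0 := by omega
    subst this; simpa using hyy
  · intro n hn
    have : n = 0 := by omega
    subst this
    simp only [if_pos rfl, if_neg one_ne_zero]
    exact ⟨h1, h2⟩

section Walks

variable {G : ELGraph V} {A : Set (V × V)} {k : ℕ} {P Q : ℕ → V}

lemma rel_seg (hP : G.IsWalk k P) (hQ : G.IsWalk k Q) (hW : G.WalksAvoid k P Q)
    {i j : ℕ} (hij : i < j) (hjk : j ≤ k) :
    G.Related (P i, Q i) (P j, Q j) := by
  have e : i + (j - i) = j := by omega
  refine ⟨j - i, by omega, (fun t => P (i + t)), (fun t => Q (i + t)), ?_, ?_,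
    by simp, by simp, by simp [e], by simp [e], ?_⟩
  · intro t ht
    exact hP (i + t) (by omega)
  · intro t ht
    exact hQ (i + t) (by omega)
  · intro t ht
    exact hW (i + t) (by omega)

lemma stairM (hA : G.IsDeltaClass A) (hP : G.IsWalk k P) (hQ : G.IsWalk k Q)
    (hW : G.WalksAvoid k P Q) (hp : (P 0, Q 0) ∈ A) (hq : (P k, Q k) ∈ A)
    {i : ℕ} (hik : i ≤ k) : (P i, Q i) ∈ A := by
  rcases Nat.eq_zero_or_pos i with rfl | hi0
  · exact hp
  rcases eq_or_lt_of_le hik with rfl | hik'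
  · exact hq
  exact mem_of_related hA hp hq (rel_seg hP hQ hW hi0 hik)
    (rel_seg hP hQ hW hik' le_rfl)

lemma stairN (hA : G.IsDeltaClass A) (hP : G.IsWalk k P) (hQ : G.IsWalk k Q)
    (hW : G.WalksAvoid k P Q) (hp : (P 0, Q 0) ∈ A) (hq : (P k, Q k) ∈ A)
    {i : ℕ} (hik : i < k) : (P i, Q (i + 1)) ∈ A := by
  have E1 := (hW i hik).1
  have E2 := (hW i hik).2
  have L1 : G.Related (P i, Q i) (P i, Q (i + 1)) :=
    step1 (G.refl _) (hQ i hik) E1 ⟨E2.1, E2.1, fun _ _ => G.ovl_irrefl _⟩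
  have L2 : G.Related (P i, Q (i + 1)) (P (i + 1), Q (i + 1)) :=
    step1 (hP i hik) (G.refl _) ⟨E1.2.1, E1.2.1, fun _ _ => G.ovl_irrefl _⟩ E2
  have hL2' : G.Related (P i, Q (i + 1)) (P k, Q k) := by
    rcases eq_or_lt_of_le (Nat.succ_le_of_lt hik) with he | hlt
    · rw [← he]; exact L2
    · exact related_trans L2 (rel_seg hP hQ hW hlt le_rfl)
  exact mem_of_related hA (stairM hA hP hQ hW hp hq hik.le) hq L1 hL2'

end Walks

end ELGraph
namespace ELGraph

variable {V : Type}

lemma span_core {G : ELGraph V} {A : Set (V × V)} (hA : G.IsDeltaClass A)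
    (hovl : ∀ p ∈ A, G.Ovl p.1 p.2) {k : ℕ} {P Q : ℕ → V}
    (hP : G.IsWalk k P) (hQ : G.IsWalk k Q) (hW : G.WalksAvoid k P Q)
    (hp : (P 0, Q 0) ∈ A) (hq : (P k, Q k) ∈ A) :
    ∀ d i j, i ≤ j → j ≤ k → j - i ≤ d →
      (G.Adj (P i) (P j) ∧ G.Adj (P i) (Q j) ∧
       G.Adj (Q i) (P j) ∧ G.Adj (Q i) (Q j)) := by
  intro d
  induction d with
  | zero =>
    intro i j hij hjk hd
    have : i = j := by omega
    subst this
    have oab := hovl _ (stairM hA hP hQ hW hp hq hjk)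
    exact ⟨G.refl _, G.ovl_adj _ _ oab, G.symm _ _ (G.ovl_adj _ _ oab), G.refl _⟩
  | succ d ih =>
    intro i j hij hjk hd
    rcases eq_or_lt_of_le hij with rfl | hij'
    · have oab := hovl _ (stairM hA hP hQ hW hp hq hjk)
      exact ⟨G.refl _, G.ovl_adj _ _ oab, G.symm _ _ (G.ovl_adj _ _ oab), G.refl _⟩
    obtain ⟨j', rfl⟩ : ∃ j'', j = j'' + 1 := ⟨j - 1, by omega⟩
    have IH1 := ih i j' (by omega) (by omega) (by omega)
    have IH2 := ih (i + 1) (j' + 1) (by omega) hjk (by omega)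
    have oed : G.Ovl (P j') (Q (j' + 1)) :=
      hovl _ (stairN hA hP hQ hW hp hq (by omega))
    have oaf : G.Ovl (P i) (Q (i + 1)) :=
      hovl _ (stairN hA hP hQ hW hp hq (by omega))
    have ocd : G.Ovl (P (j' + 1)) (Q (j' + 1)) :=
      hovl _ (stairM hA hP hQ hW hp hq hjk)
    -- (1)  Adj (P i) (Q (j'+1))
    have h1 : G.Adj (P i) (Q (j' + 1)) := by
      by_contra h
      have R1 : G.Related (P j', Q (j' + 1)) (P i, Q (j' + 1)) :=
        step1 (G.symm _ _ IH1.1) (G.refl _)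
          ⟨fun _ => oed, fun _ => oed, fun _ _ => G.ovl_irrefl _⟩
          ⟨fun _ => G.ovl_symm _ _ oed,
           fun hda => absurd (G.symm _ _ hda) h,
           fun _ hda => absurd (G.symm _ _ (G.ovl_adj _ _ hda)) h⟩
      have R2 : G.Related (P i, Q (j' + 1)) (P i, Q (i + 1)) :=
        step1 (G.refl _) (G.symm _ _ IH2.2.2.2)
          ⟨fun had => absurd had h, fun _ => oaf,
           fun hoad _ => absurd (G.ovl_adj _ _ hoad) h⟩
          ⟨fun _ => G.ovl_symm _ _ oaf, fun _ => G.ovl_symm _ _ oaf,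
           fun _ _ => G.ovl_irrefl _⟩
      have hm : (P i, Q (j' + 1)) ∈ A :=
        mem_of_related hA (stairN hA hP hQ hW hp hq (by omega))
          (stairN hA hP hQ hW hp hq (by omega)) R1 R2
      exact h (G.ovl_adj _ _ (hovl _ hm))
    -- (4)  Adj (Q i) (Q (j'+1))
    have h4 : G.Adj (Q i) (Q (j' + 1)) := by
      by_contra h
      have R1 : G.Related (P j', Q (j' + 1)) (Q i, Q (j' + 1)) :=
        step1 (G.symm _ _ IH1.2.2.1) (G.refl _)
          ⟨fun _ => oed, fun _ => oed, fun _ _ => G.ovl_irrefl _⟩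
          ⟨fun _ => G.ovl_symm _ _ oed,
           fun hdb => absurd (G.symm _ _ hdb) h,
           fun _ hdb => absurd (G.symm _ _ (G.ovl_adj _ _ hdb)) h⟩
      have R2 : G.Related (Q i, Q (j' + 1)) (P j', Q (j' + 1)) :=
        step1 IH1.2.2.1 (G.refl _)
          ⟨fun hbd => absurd hbd h, fun hbd => absurd hbd h,
           fun ho _ => absurd (G.ovl_adj _ _ ho) h⟩
          ⟨fun hdb => absurd (G.symm _ _ hdb) h, fun _ => G.ovl_symm _ _ oed,
           fun ho _ => absurd (G.symm _ _ (G.ovl_adj _ _ ho)) h⟩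
      have hm : (Q i, Q (j' + 1)) ∈ A :=
        mem_of_related hA (stairN hA hP hQ hW hp hq (by omega))
          (stairN hA hP hQ hW hp hq (by omega)) R1 R2
      exact h (G.ovl_adj _ _ (hovl _ hm))
    -- (2)  Adj (Q i) (P (j'+1))
    have h2 : G.Adj (Q i) (P (j' + 1)) := by
      by_contra h
      have R1 : G.Related (P (j' + 1), Q (j' + 1)) (P (j' + 1), Q i) :=
        step1 (G.refl _) (G.symm _ _ h4)
          ⟨fun _ => ocd, fun hcb => absurd (G.symm _ _ hcb) h,
           fun _ hocb => absurd (G.symm _ _ (G.ovl_adj _ _ hocb)) h⟩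
          ⟨fun hbc => absurd hbc h, fun hbc => absurd hbc h,
           fun _ _ => G.ovl_irrefl _⟩
      have R2 : G.Related (P (j' + 1), Q i) (P (j' + 1), Q (j' + 1)) :=
        step1 (G.refl _) h4
          ⟨fun hcb => absurd (G.symm _ _ hcb) h, fun _ => ocd,
           fun ho _ => absurd (G.symm _ _ (G.ovl_adj _ _ ho)) h⟩
          ⟨fun _ => G.ovl_symm _ _ ocd, fun _ => G.ovl_symm _ _ ocd,
           fun _ _ => G.ovl_irrefl _⟩
      have hm : (P (j' + 1), Q i) ∈ A :=
        mem_of_related hA (stairM hA hP hQ hW hp hq hjk)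
          (stairM hA hP hQ hW hp hq hjk) R1 R2
      exact h (G.symm _ _ (G.ovl_adj _ _ (hovl _ hm)))
    -- (3)  Adj (P i) (P (j'+1))
    have h3 : G.Adj (P i) (P (j' + 1)) := by
      by_contra h
      have R1 : G.Related (P (j' + 1), Q (j' + 1)) (P (j' + 1), P i) :=
        step1 (G.refl _) (G.symm _ _ h1)
          ⟨fun _ => ocd, fun hca => absurd (G.symm _ _ hca) h,
           fun _ hoca => absurd (G.symm _ _ (G.ovl_adj _ _ hoca)) h⟩
          ⟨fun hac => absurd hac h, fun hac => absurd hac h,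
           fun _ _ => G.ovl_irrefl _⟩
      have R2 : G.Related (P (j' + 1), P i) (P (j' + 1), Q (j' + 1)) :=
        step1 (G.refl _) h1
          ⟨fun hca => absurd (G.symm _ _ hca) h, fun _ => ocd,
           fun ho _ => absurd (G.symm _ _ (G.ovl_adj _ _ ho)) h⟩
          ⟨fun _ => G.ovl_symm _ _ ocd, fun _ => G.ovl_symm _ _ ocd,
           fun _ _ => G.ovl_irrefl _⟩
      have hm : (P (j' + 1), P i) ∈ A :=
        mem_of_related hA (stairM hA hP hQ hW hp hq hjk)
          (stairM hA hP hQ hW hp hq hjk) R1 R2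
      exact h (G.symm _ _ (G.ovl_adj _ _ (hovl _ hm)))
    exact ⟨h3, h1, h2, h4⟩

end ELGraph

/-- If every pair of a Δ-implication class `A` is an overlap edge,
then `span A` induces a clique. -/
theorem deltaClass_span_clique
    {V : Type} [Fintype V] (G : ELGraph V) (A : Set (V × V))
    (hA : G.IsDeltaClass A) (hovl : ∀ p ∈ A, G.Ovl p.1 p.2) :
    G.IsClique (ELGraph.span A) := by
  intro a ha b hb
  obtain ⟨p, hp, hap⟩ := ha
  obtain ⟨q, hq, hbq⟩ := hb
  obtain ⟨k, hk, P, Q, hP, hQ, hP0, hQ0, hPk, hQk, hW⟩ := hA.2.1 p hp q hq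
  have hp' : (P 0, Q 0) ∈ A := by rw [hP0, hQ0, Prod.mk.eta]; exact hp
  have hq' : (P k, Q k) ∈ A := by rw [hPk, hQk, Prod.mk.eta]; exact hq
  have C := ELGraph.span_core hA hovl hP hQ hW hp' hq' k 0 k (Nat.zero_le _)
    le_rfl (by omega)
  rcases hap with rfl | rfl <;> rcases hbq with rfl | rfl
  · rw [← hP0, ← hPk]; exact C.1
  · rw [← hP0, ← hQk]; exact C.2.1
  · rw [← hQ0, ← hPk]; exact C.2.2.1
  · rw [← hQ0, ← hQk]; exact C.2.2.2
end

section
/- Let A be a Δ-implication class of an edge-labelled graph G. Then: (1) if F is a Δ-module of G containing vertices a and b with (a,b) ∈ A, then span(A) ⊆ F; and (2) span(A) is a Δ-module of G. -/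
namespace DeltaAux

open ELGraph

variable {V : Type} (G : ELGraph V)

/-- One forcing step between ordered pairs. -/
def Step (p q : V × V) : Prop :=
  G.Adj p.1 q.1 ∧ G.Adj p.2 q.2 ∧ G.AvoidsEdge p.1 p.2 q.2 ∧ G.AvoidsEdge q.2 p.1 q.1

abbrev RR (p q : V × V) : Prop := Relation.TransGen (Step G) p q

variable {G}

lemma ae_symm {z a b : V} (h : G.AvoidsEdge z a b) : G.AvoidsEdge z b a :=
  ⟨h.2.1, h.1, fun o1 o2 o3 => h.2.2 o2 o1 (G.ovl_symm _ _ o3)⟩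

lemma step_swap {p q : V × V} (h : Step G p q) : Step G q.swap p.swap := by
  obtain ⟨h1, h2, h3, h4⟩ := h
  exact ⟨G.symm _ _ h2, G.symm _ _ h1, ae_symm h4, ae_symm h3⟩

lemma rr_swap {p q : V × V} (h : RR G p q) : RR G q.swap p.swap := by
  induction h with
  | single h => exact Relation.TransGen.single (step_swap h)
  | tail _ h ih => exact Relation.TransGen.head (step_swap h) ih

lemma related_single {p q : V × V} (h : Step G p q) : G.Related p q := by
  obtain ⟨h1, h2, h3, h4⟩ := h
  refine ⟨1, one_pos, (fun i => if i = 0 then p.1 else q.1),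
    (fun i => if i = 0 then p.2 else q.2), ?_, ?_, by simp, by simp, by simp, by simp, ?_⟩
  · intro i hi
    have : i = 0 := by omega
    subst this; simpa using h1
  · intro i hi
    have : i = 0 := by omega
    subst this; simpa using h2
  · intro i hi
    have : i = 0 := by omega
    subst this
    exact ⟨by simpa using h3, by simpa using h4⟩

def ext (k : ℕ) (P : ℕ → V) (a : V) : ℕ → V := fun i => if i ≤ k then P i else a

lemma ext_le {k i : ℕ} {P : ℕ → V} {a : V} (h : i ≤ k) : ext k P a i = P i := if_pos h

lemma ext_gt {k i : ℕ} {P : ℕ → V} {a : V} (h : ¬ i ≤ k) : ext k P a i = a := if_neg h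

lemma related_snoc {p q r : V × V} (h : G.Related p q) (hs : Step G q r) : G.Related p r := by
  obtain ⟨k, hk, P, Q, hP, hQ, hP0, hQ0, hPk, hQk, hW⟩ := h
  obtain ⟨s1, s2, s3, s4⟩ := hs
  refine ⟨k+1, by omega, ext k P r.1, ext k Q r.2, ?_, ?_, ?_, ?_, ?_, ?_, ?_⟩
  · intro i hi
    rcases Nat.lt_or_ge i k with h' | h'
    · rw [ext_le (by omega : i ≤ k), ext_le (by omega : i+1 ≤ k)]
      exact hP i h'
    · have hik : i = k := by omega
      subst hik
      rw [ext_le le_rfl, ext_gt (by omega : ¬ i+1 ≤ i), hPk]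
      exact s1
  · intro i hi
    rcases Nat.lt_or_ge i k with h' | h'
    · rw [ext_le (by omega : i ≤ k), ext_le (by omega : i+1 ≤ k)]
      exact hQ i h'
    · have hik : i = k := by omega
      subst hik
      rw [ext_le le_rfl, ext_gt (by omega : ¬ i+1 ≤ i), hQk]
      exact s2
  · rw [ext_le (Nat.zero_le k)]; exact hP0
  · rw [ext_le (Nat.zero_le k)]; exact hQ0
  · rw [ext_gt (by omega : ¬ k+1 ≤ k)]
  · rw [ext_gt (by omega : ¬ k+1 ≤ k)]
  · intro i hi
    rcases Nat.lt_or_ge i k with h' | h'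
    · have e1 : ext k P r.1 i = P i := ext_le (by omega)
      have e2 : ext k P r.1 (i+1) = P (i+1) := ext_le (by omega)
      have e3 : ext k Q r.2 i = Q i := ext_le (by omega)
      have e4 : ext k Q r.2 (i+1) = Q (i+1) := ext_le (by omega)
      rw [e1, e2, e3, e4]
      exact hW i h'
    · have hik : i = k := by omega
      subst hik
      have e1 : ext i P r.1 i = P i := ext_le le_rfl
      have e2 : ext i P r.1 (i+1) = r.1 := ext_gt (by omega)
      have e3 : ext i Q r.2 i = Q i := ext_le le_rfl
      have e4 : ext i Q r.2 (i+1) = r.2 := ext_gt (by omega)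
      rw [e1, e2, e3, e4, hPk, hQk]
      exact ⟨s3, s4⟩

lemma related_of_rr {p q : V × V} (h : RR G p q) : G.Related p q := by
  induction h with
  | single h => exact related_single h
  | tail _ h ih => exact related_snoc ih h

lemma seg {k : ℕ} {P Q : ℕ → V} (hP : G.IsWalk k P) (hQ : G.IsWalk k Q)
    (hW : G.WalksAvoid k P Q) :
    ∀ j i, i < j → j ≤ k → RR G (P i, Q i) (P j, Q j) := by
  intro j
  induction j with
  | zero => intro i h _; omega
  | succ n ih =>
    intro i hij hjk
    have hstep : Step G (P n, Q n) (P (n+1), Q (n+1)) :=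
      ⟨hP n (by omega), hQ n (by omega), (hW n (by omega)).1, (hW n (by omega)).2⟩
    rcases Nat.lt_or_ge i n with h' | h'
    · exact (ih i h' (by omega)).tail hstep
    · have : i = n := by omega
      subst this
      exact Relation.TransGen.single hstep

lemma rr_of_related {p q : V × V} (h : G.Related p q) : RR G p q := by
  obtain ⟨k, hk, P, Q, hP, hQ, hP0, hQ0, hPk, hQk, hW⟩ := h
  have h1 := seg hP hQ hW k 0 hk le_rfl
  rw [hP0, hQ0, hPk, hQk] at h1
  exact h1

section WithClass

variable {A : Set (V × V)}

lemma mem_of_rr (hA : G.IsDeltaClass A) {p q r : V × V}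
    (hp : p ∈ A) (hq : q ∈ A) (h1 : RR G p r) (h2 : RR G r q) : r ∈ A := by
  obtain ⟨hne, hrel, hmax⟩ := hA
  have hrr : ∀ a ∈ A, ∀ b ∈ A, RR G a b := fun a ha b hb => rr_of_related (hrel a ha b hb)
  have hall : ∀ a ∈ insert r A, ∀ b ∈ insert r A, G.Related a b := by
    intro a ha b hb
    rcases Set.mem_insert_iff.1 ha with rfl | ha' <;>
      rcases Set.mem_insert_iff.1 hb with rfl | hb'
    · exact related_of_rr ((h2.trans (hrr q hq p hp)).trans h1)
    · exact related_of_rr (h2.trans (hrr q hq b hb'))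
    · exact related_of_rr ((hrr a ha' p hp).trans h1)
    · exact hrel a ha' b hb'
  have hBA := hmax _ (Set.subset_insert _ _) hall
  rw [← hBA]
  exact Set.mem_insert _ _

lemma mem_swap_of_rr (hA : G.IsDeltaClass A) {p q r : V × V}
    (hp : p ∈ A) (hq : q ∈ A) (h1 : RR G q.swap r) (h2 : RR G r p.swap) : r.swap ∈ A :=
  mem_of_rr hA hp hq (rr_swap h2) (rr_swap h1)

lemma F0 (hA : G.IsDeltaClass A) {u v : V} (h : (u,v) ∈ A) : G.Adj u v → G.Ovl u v := by
  intro hadj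
  obtain ⟨k, hk, P, Q, hP, hQ, hP0, hQ0, hPk, hQk, hW⟩ := hA.2.1 _ h _ h
  have hc := (hW 0 hk).1.1
  rw [hP0, hQ0] at hc
  exact hc hadj

lemma mid_mem (hA : G.IsDeltaClass A) {p q : V × V} (hp : p ∈ A) (hq : q ∈ A)
    {k : ℕ} {P Q : ℕ → V}
    (hP : G.IsWalk k P) (hQ : G.IsWalk k Q)
    (hP0 : P 0 = p.1) (hQ0 : Q 0 = p.2) (hPk : P k = q.1) (hQk : Q k = q.2)
    (hW : G.WalksAvoid k P Q) : ∀ i ≤ k, (P i, Q i) ∈ A := by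
  intro i hik
  rcases Nat.eq_zero_or_pos i with rfl | hi
  · rw [hP0, hQ0]; exact hp
  rcases eq_or_lt_of_le hik with rfl | hlt
  · rw [hPk, hQk]; exact hq
  · have hfwd := seg hP hQ hW i 0 hi hik
    rw [hP0, hQ0] at hfwd
    have hbwd := seg hP hQ hW k i hlt le_rfl
    rw [hPk, hQk] at hbwd
    exact mem_of_rr hA hp hq hfwd hbwd

variable {x : V}

/-- Loop rule, inserting `(u,x)`. -/
lemma L1 (hA : G.IsDeltaClass A) (hx : x ∉ ELGraph.span A) {u v : V} (hp : (u,v) ∈ A)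
    (h1 : G.Adj v x) (h2 : G.Adj u x → G.Ovl u x)
    (h3 : ¬ (G.Ovl u v ∧ G.Ovl u x ∧ G.Ovl v x)) : False := by
  have f0 : G.Adj u v → G.Ovl u v := F0 hA hp
  have st1 : Step G (u,v) (u,x) :=
    ⟨G.refl u, h1,
     ⟨f0, h2, fun o1 o2 o3 => h3 ⟨o1, o2, o3⟩⟩,
     ⟨fun a => G.ovl_symm _ _ (h2 (G.symm _ _ a)), fun a => G.ovl_symm _ _ (h2 (G.symm _ _ a)),
      fun _ _ => G.ovl_irrefl u⟩⟩
  have st2 : Step G (u,x) (u,v) :=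
    ⟨G.refl u, G.symm _ _ h1,
     ⟨h2, f0, fun o1 o2 o3 => h3 ⟨o2, o1, G.ovl_symm _ _ o3⟩⟩,
     ⟨fun a => G.ovl_symm _ _ (f0 (G.symm _ _ a)), fun a => G.ovl_symm _ _ (f0 (G.symm _ _ a)),
      fun _ _ => G.ovl_irrefl u⟩⟩
  exact hx ⟨(u,x), mem_of_rr hA hp hp (.single st1) (.single st2), Or.inr rfl⟩

/-- Swapped loop rule, inserting `(x,v)`. -/
lemma L1' (hA : G.IsDeltaClass A) (hx : x ∉ ELGraph.span A) {u v : V} (hp : (u,v) ∈ A)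
    (h1 : G.Adj u x) (h2 : G.Adj v x → G.Ovl v x)
    (h3 : ¬ (G.Ovl u v ∧ G.Ovl v x ∧ G.Ovl u x)) : False := by
  have f0 : G.Adj u v → G.Ovl u v := F0 hA hp
  have f0' : G.Adj v u → G.Ovl v u := fun a => G.ovl_symm _ _ (f0 (G.symm _ _ a))
  have st1 : Step G (v,u) (v,x) :=
    ⟨G.refl v, h1,
     ⟨f0', h2, fun o1 o2 o3 => h3 ⟨G.ovl_symm _ _ o1, o2, o3⟩⟩,
     ⟨fun a => G.ovl_symm _ _ (h2 (G.symm _ _ a)), fun a => G.ovl_symm _ _ (h2 (G.symm _ _ a)),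
      fun _ _ => G.ovl_irrefl v⟩⟩
  have st2 : Step G (v,x) (v,u) :=
    ⟨G.refl v, G.symm _ _ h1,
     ⟨h2, f0', fun o1 o2 o3 => h3 ⟨G.ovl_symm _ _ o2, o1, G.ovl_symm _ _ o3⟩⟩,
     ⟨f0, f0, fun _ _ => G.ovl_irrefl v⟩⟩
  have hmem : ((v,x) : V × V).swap ∈ A :=
    mem_swap_of_rr hA hp hp (.single st1) (.single st2)
  exact hx ⟨(x,v), hmem, Or.inl rfl⟩

/-- Step rule, inserting `(x,v')`. -/
lemma L2 (hA : G.IsDeltaClass A) (hx : x ∉ ELGraph.span A) {u v v' : V} (hp : (u,v) ∈ A)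
    (hvv' : G.Adj v v') (hAE : G.AvoidsEdge u v v')
    (h1 : G.Adj u x) (h2 : G.Adj v' x → G.Ovl v' x)
    (h3 : ¬ (G.Ovl v' u ∧ G.Ovl v' x ∧ G.Ovl u x)) : False := by
  obtain ⟨a1, a2, a3⟩ := hAE
  have st1 : Step G (u,v) (x,v') :=
    ⟨h1, hvv', ⟨a1, a2, a3⟩,
     ⟨fun a => G.ovl_symm _ _ (a2 (G.symm _ _ a)), h2,
      fun o1 o2 o3 => h3 ⟨o1, o2, o3⟩⟩⟩
  have st2 : Step G (x,v') (u,v') :=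
    ⟨G.symm _ _ h1, G.refl v',
     ⟨fun a => G.ovl_symm _ _ (h2 (G.symm _ _ a)), fun a => G.ovl_symm _ _ (h2 (G.symm _ _ a)),
      fun _ _ => G.ovl_irrefl v'⟩,
     ⟨h2, fun a => G.ovl_symm _ _ (a2 (G.symm _ _ a)),
      fun o1 o2 o3 => h3 ⟨o2, o1, G.ovl_symm _ _ o3⟩⟩⟩
  have st3 : Step G (u,v') (u,v) :=
    ⟨G.refl u, G.symm _ _ hvv',
     ⟨a2, a1, fun o1 o2 o3 => a3 o2 o1 (G.ovl_symm _ _ o3)⟩,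
     ⟨fun a => G.ovl_symm _ _ (a1 (G.symm _ _ a)), fun a => G.ovl_symm _ _ (a1 (G.symm _ _ a)),
      fun _ _ => G.ovl_irrefl u⟩⟩
  exact hx ⟨(x,v'), mem_of_rr hA hp hp (.single st1)
    ((Relation.TransGen.single st2).tail st3), Or.inl rfl⟩

/-- Swapped step rule, inserting `(u,x)`. -/
lemma L2' (hA : G.IsDeltaClass A) (hx : x ∉ ELGraph.span A) {u u' v' : V} (hp : (u',v') ∈ A)
    (huu' : G.Adj u u') (hAE : G.AvoidsEdge v' u u')
    (h1 : G.Adj v' x) (h2 : G.Adj u x → G.Ovl u x)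
    (h3 : ¬ (G.Ovl u v' ∧ G.Ovl u x ∧ G.Ovl v' x)) : False := by
  obtain ⟨b1, b2, b3⟩ := hAE
  have st1 : Step G (v',u') (x,u) :=
    ⟨h1, G.symm _ _ huu',
     ⟨b2, b1, fun o1 o2 o3 => b3 o2 o1 (G.ovl_symm _ _ o3)⟩,
     ⟨fun a => G.ovl_symm _ _ (b1 (G.symm _ _ a)), h2, fun o1 o2 o3 => h3 ⟨o1, o2, o3⟩⟩⟩
  have st2 : Step G (x,u) (v',u) :=
    ⟨G.symm _ _ h1, G.refl u,
     ⟨fun a => G.ovl_symm _ _ (h2 (G.symm _ _ a)), fun a => G.ovl_symm _ _ (h2 (G.symm _ _ a)),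
      fun _ _ => G.ovl_irrefl u⟩,
     ⟨h2, fun a => G.ovl_symm _ _ (b1 (G.symm _ _ a)),
      fun o1 o2 o3 => h3 ⟨o2, o1, G.ovl_symm _ _ o3⟩⟩⟩
  have st3 : Step G (v',u) (v',u') :=
    ⟨G.refl v', huu', ⟨b1, b2, b3⟩,
     ⟨fun a => G.ovl_symm _ _ (b2 (G.symm _ _ a)), fun a => G.ovl_symm _ _ (b2 (G.symm _ _ a)),
      fun _ _ => G.ovl_irrefl v'⟩⟩
  have hmem : ((x,u) : V × V).swap ∈ A :=
    mem_swap_of_rr hA hp hp (.single st1) ((Relation.TransGen.single st2).tail st3)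
  exact hx ⟨(u,x), hmem, Or.inr rfl⟩

/-- Within-pair adjacency propagation, inserting `(x,d)`. -/
lemma L3 (hA : G.IsDeltaClass A) (hx : x ∉ ELGraph.span A) {c d w : V} (hp : (c,d) ∈ A)
    (h1 : G.Adj w c) (h2 : ¬ G.Adj w d) (hxw : G.Ovl x w) (hxd : G.Ovl x d) : False := by
  have f0 : G.Adj c d → G.Ovl c d := F0 hA hp
  have hwx : G.Adj w x := G.symm _ _ (G.ovl_adj _ _ hxw)
  have st1 : Step G (c,d) (w,d) :=
    ⟨G.symm _ _ h1, G.refl d,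
     ⟨f0, f0, fun _ _ => G.ovl_irrefl d⟩,
     ⟨fun a => G.ovl_symm _ _ (f0 (G.symm _ _ a)), fun a => (h2 (G.symm _ _ a)).elim,
      fun _ o2 => ((h2 (G.symm _ _ (G.ovl_adj _ _ o2))).elim)⟩⟩
  have st2 : Step G (w,d) (x,d) :=
    ⟨hwx, G.refl d,
     ⟨fun a => (h2 a).elim, fun a => (h2 a).elim, fun _ _ => G.ovl_irrefl d⟩,
     ⟨fun a => (h2 (G.symm _ _ a)).elim, fun _ => G.ovl_symm _ _ hxd,
      fun o1 _ => ((h2 (G.symm _ _ (G.ovl_adj _ _ o1))).elim)⟩⟩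
  have st3 : Step G (x,d) (w,d) :=
    ⟨G.ovl_adj _ _ hxw, G.refl d,
     ⟨fun _ => hxd, fun _ => hxd, fun _ _ => G.ovl_irrefl d⟩,
     ⟨fun _ => G.ovl_symm _ _ hxd, fun a => (h2 (G.symm _ _ a)).elim,
      fun _ o2 => ((h2 (G.symm _ _ (G.ovl_adj _ _ o2))).elim)⟩⟩
  have st4 : Step G (w,d) (c,d) :=
    ⟨h1, G.refl d,
     ⟨fun a => (h2 a).elim, fun a => (h2 a).elim, fun _ _ => G.ovl_irrefl d⟩,
     ⟨fun a => (h2 (G.symm _ _ a)).elim, fun a => G.ovl_symm _ _ (f0 (G.symm _ _ a)),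
      fun o1 _ => ((h2 (G.symm _ _ (G.ovl_adj _ _ o1))).elim)⟩⟩
  exact hx ⟨(x,d), mem_of_rr hA hp hp ((Relation.TransGen.single st1).tail st2)
    ((Relation.TransGen.single st3).tail st4), Or.inl rfl⟩

/-- Swapped within-pair adjacency propagation, inserting `(c,x)`. -/
lemma L3' (hA : G.IsDeltaClass A) (hx : x ∉ ELGraph.span A) {c d w : V} (hp : (c,d) ∈ A)
    (h1 : G.Adj w d) (h2 : ¬ G.Adj w c) (hxw : G.Ovl x w) (hxc : G.Ovl x c) : False := by
  have f0 : G.Adj c d → G.Ovl c d := F0 hA hp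
  have f0' : G.Adj d c → G.Ovl d c := fun a => G.ovl_symm _ _ (f0 (G.symm _ _ a))
  have hwx : G.Adj w x := G.symm _ _ (G.ovl_adj _ _ hxw)
  have st1 : Step G (d,c) (w,c) :=
    ⟨G.symm _ _ h1, G.refl c,
     ⟨f0', f0', fun _ _ => G.ovl_irrefl c⟩,
     ⟨f0, fun a => (h2 (G.symm _ _ a)).elim,
      fun _ o2 => ((h2 (G.symm _ _ (G.ovl_adj _ _ o2))).elim)⟩⟩
  have st2 : Step G (w,c) (x,c) :=
    ⟨hwx, G.refl c,
     ⟨fun a => (h2 a).elim, fun a => (h2 a).elim, fun _ _ => G.ovl_irrefl c⟩,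
     ⟨fun a => (h2 (G.symm _ _ a)).elim, fun _ => G.ovl_symm _ _ hxc,
      fun o1 _ => ((h2 (G.symm _ _ (G.ovl_adj _ _ o1))).elim)⟩⟩
  have st3 : Step G (x,c) (w,c) :=
    ⟨G.ovl_adj _ _ hxw, G.refl c,
     ⟨fun _ => hxc, fun _ => hxc, fun _ _ => G.ovl_irrefl c⟩,
     ⟨fun _ => G.ovl_symm _ _ hxc, fun a => (h2 (G.symm _ _ a)).elim,
      fun _ o2 => ((h2 (G.symm _ _ (G.ovl_adj _ _ o2))).elim)⟩⟩
  have st4 : Step G (w,c) (d,c) :=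
    ⟨h1, G.refl c,
     ⟨fun a => (h2 a).elim, fun a => (h2 a).elim, fun _ _ => G.ovl_irrefl c⟩,
     ⟨fun a => (h2 (G.symm _ _ a)).elim, f0,
      fun o1 _ => ((h2 (G.symm _ _ (G.ovl_adj _ _ o1))).elim)⟩⟩
  have hmem : ((x,c) : V × V).swap ∈ A :=
    mem_swap_of_rr hA hp hp ((Relation.TransGen.single st1).tail st2)
      ((Relation.TransGen.single st3).tail st4)
  exact hx ⟨(c,x), hmem, Or.inr rfl⟩

/-- Cross-step adjacency propagation, inserting `(x,d')`. -/
lemma L4 (hA : G.IsDeltaClass A) (hx : x ∉ ELGraph.span A) {c d d' w : V} (hp : (c,d) ∈ A)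
    (hdd' : G.Adj d d') (hAE : G.AvoidsEdge c d d')
    (h1 : G.Adj w c) (h2 : ¬ G.Adj w d') (hxw : G.Ovl x w) (hxd' : G.Ovl x d') : False := by
  obtain ⟨a1, a2, a3⟩ := hAE
  have hwx : G.Adj w x := G.symm _ _ (G.ovl_adj _ _ hxw)
  have st1 : Step G (c,d) (w,d') :=
    ⟨G.symm _ _ h1, hdd', ⟨a1, a2, a3⟩,
     ⟨fun a => G.ovl_symm _ _ (a2 (G.symm _ _ a)), fun a => (h2 (G.symm _ _ a)).elim,
      fun _ o2 => ((h2 (G.symm _ _ (G.ovl_adj _ _ o2))).elim)⟩⟩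
  have st2 : Step G (w,d') (x,d') :=
    ⟨hwx, G.refl d',
     ⟨fun a => (h2 a).elim, fun a => (h2 a).elim, fun _ _ => G.ovl_irrefl d'⟩,
     ⟨fun a => (h2 (G.symm _ _ a)).elim, fun _ => G.ovl_symm _ _ hxd',
      fun o1 _ => ((h2 (G.symm _ _ (G.ovl_adj _ _ o1))).elim)⟩⟩
  have st3 : Step G (x,d') (w,d') :=
    ⟨G.ovl_adj _ _ hxw, G.refl d',
     ⟨fun _ => hxd', fun _ => hxd', fun _ _ => G.ovl_irrefl d'⟩,
     ⟨fun _ => G.ovl_symm _ _ hxd', fun a => (h2 (G.symm _ _ a)).elim,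
      fun _ o2 => ((h2 (G.symm _ _ (G.ovl_adj _ _ o2))).elim)⟩⟩
  have st4 : Step G (w,d') (c,d') :=
    ⟨h1, G.refl d',
     ⟨fun a => (h2 a).elim, fun a => (h2 a).elim, fun _ _ => G.ovl_irrefl d'⟩,
     ⟨fun a => (h2 (G.symm _ _ a)).elim, fun a => G.ovl_symm _ _ (a2 (G.symm _ _ a)),
      fun o1 _ => ((h2 (G.symm _ _ (G.ovl_adj _ _ o1))).elim)⟩⟩
  have st5 : Step G (c,d') (c,d) :=
    ⟨G.refl c, G.symm _ _ hdd',
     ⟨a2, a1, fun o1 o2 o3 => a3 o2 o1 (G.ovl_symm _ _ o3)⟩,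
     ⟨fun a => G.ovl_symm _ _ (a1 (G.symm _ _ a)), fun a => G.ovl_symm _ _ (a1 (G.symm _ _ a)),
      fun _ _ => G.ovl_irrefl c⟩⟩
  exact hx ⟨(x,d'), mem_of_rr hA hp hp ((Relation.TransGen.single st1).tail st2)
    (((Relation.TransGen.single st3).tail st4).tail st5), Or.inl rfl⟩

lemma pairT (hA : G.IsDeltaClass A) (hx : x ∉ ELGraph.span A) {u v : V} (hp : (u,v) ∈ A) :
    (G.Adj x u ↔ G.Adj x v) ∧ (G.Ovl x u ↔ G.Ovl x v) := by
  have hadj1 : G.Adj x u → G.Adj x v := by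
    intro hxu; by_contra hxv
    exact L1' hA hx hp (G.symm _ _ hxu) (fun a => absurd (G.symm _ _ a) hxv)
      (fun h => hxv (G.symm _ _ (G.ovl_adj _ _ h.2.1)))
  have hadj2 : G.Adj x v → G.Adj x u := by
    intro hxv; by_contra hxu
    exact L1 hA hx hp (G.symm _ _ hxv) (fun a => absurd (G.symm _ _ a) hxu)
      (fun h => hxu (G.symm _ _ (G.ovl_adj _ _ h.2.1)))
  refine ⟨⟨hadj1, hadj2⟩, ?_, ?_⟩
  · intro hxu; by_contra hov
    exact L1 hA hx hp (G.symm _ _ (hadj1 (G.ovl_adj _ _ hxu)))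
      (fun _ => G.ovl_symm _ _ hxu)
      (fun h => hov (G.ovl_symm _ _ h.2.2))
  · intro hxv; by_contra hov
    exact L1' hA hx hp (G.symm _ _ (hadj2 (G.ovl_adj _ _ hxv)))
      (fun _ => G.ovl_symm _ _ hxv)
      (fun h => hov (G.ovl_symm _ _ h.2.2))

lemma stepT (hA : G.IsDeltaClass A) (hx : x ∉ ELGraph.span A) {u v u' v' : V}
    (hp : (u,v) ∈ A) (hq : (u',v') ∈ A)
    (hPadj : G.Adj u u') (hQadj : G.Adj v v')
    (hW1 : G.AvoidsEdge u v v') (hW2 : G.AvoidsEdge v' u u') :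
    (G.Adj x u ↔ G.Adj x v') ∧ (G.Ovl x u ↔ G.Ovl x v') := by
  have hadj1 : G.Adj x u → G.Adj x v' := by
    intro hxu; by_contra hxv'
    exact L2 hA hx hp hQadj hW1 (G.symm _ _ hxu)
      (fun a => absurd (G.symm _ _ a) hxv')
      (fun h => hxv' (G.symm _ _ (G.ovl_adj _ _ h.2.1)))
  have hadj2 : G.Adj x v' → G.Adj x u := by
    intro hxv'; by_contra hxu
    exact L2' hA hx hq hPadj hW2 (G.symm _ _ hxv')
      (fun a => absurd (G.symm _ _ a) hxu)
      (fun h => hxu (G.symm _ _ (G.ovl_adj _ _ h.2.1)))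
  refine ⟨⟨hadj1, hadj2⟩, ?_, ?_⟩
  · intro ho; by_contra hov
    exact L2' hA hx hq hPadj hW2 (G.symm _ _ (hadj1 (G.ovl_adj _ _ ho)))
      (fun _ => G.ovl_symm _ _ ho)
      (fun h => hov (G.ovl_symm _ _ h.2.2))
  · intro ho; by_contra hov
    exact L2 hA hx hp hQadj hW1 (G.symm _ _ (hadj2 (G.ovl_adj _ _ ho)))
      (fun _ => G.ovl_symm _ _ ho)
      (fun h => hov (G.ovl_symm _ _ h.2.2))

lemma uniform (hA : G.IsDeltaClass A) (hx : x ∉ ELGraph.span A) {s t : V}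
    (hs : s ∈ ELGraph.span A) (ht : t ∈ ELGraph.span A) :
    (G.Adj x s ↔ G.Adj x t) ∧ (G.Ovl x s ↔ G.Ovl x t) := by
  obtain ⟨p, hp, hsp⟩ := hs
  obtain ⟨q, hq, htq⟩ := ht
  obtain ⟨k, hk, P, Q, hP, hQ, hP0, hQ0, hPk, hQk, hW⟩ := hA.2.1 p hp q hq
  have hmid : ∀ i ≤ k, (P i, Q i) ∈ A := mid_mem hA hp hq hP hQ hP0 hQ0 hPk hQk hW
  have claim : ∀ i, i ≤ k →
      ((G.Adj x p.1 ↔ G.Adj x (P i)) ∧ (G.Ovl x p.1 ↔ G.Ovl x (P i))) ∧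
      ((G.Adj x p.1 ↔ G.Adj x (Q i)) ∧ (G.Ovl x p.1 ↔ G.Ovl x (Q i))) := by
    intro i
    induction i with
    | zero =>
      intro _
      constructor
      · rw [hP0]; exact ⟨Iff.rfl, Iff.rfl⟩
      · rw [hQ0]
        exact pairT hA hx (show ((p.1 : V), (p.2 : V)) ∈ A from hp)
    | succ n ih =>
      intro hnk
      have hn : n ≤ k := by omega
      have hnk' : n < k := by omega
      obtain ⟨ihP, _⟩ := ih hn
      have hT := stepT hA hx (hmid n hn) (hmid (n+1) hnk)
        (hP n hnk') (hQ n hnk') (hW n hnk').1 (hW n hnk').2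
      have TQ : (G.Adj x p.1 ↔ G.Adj x (Q (n+1))) ∧ (G.Ovl x p.1 ↔ G.Ovl x (Q (n+1))) :=
        ⟨ihP.1.trans hT.1, ihP.2.trans hT.2⟩
      have hpair := pairT hA hx (hmid (n+1) hnk)
      exact ⟨⟨TQ.1.trans hpair.1.symm, TQ.2.trans hpair.2.symm⟩, TQ⟩
  have hTs : (G.Adj x p.1 ↔ G.Adj x s) ∧ (G.Ovl x p.1 ↔ G.Ovl x s) := by
    rcases hsp with rfl | rfl
    · exact ⟨Iff.rfl, Iff.rfl⟩
    · exact pairT hA hx (show ((p.1 : V), (p.2 : V)) ∈ A from hp)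
  have hck := claim k le_rfl
  rw [hPk, hQk] at hck
  have hTt : (G.Adj x p.1 ↔ G.Adj x t) ∧ (G.Ovl x p.1 ↔ G.Ovl x t) := by
    rcases htq with rfl | rfl
    · exact hck.1
    · exact hck.2
  exact ⟨(hTs.1.symm).trans hTt.1, (hTs.2.symm).trans hTt.2⟩

lemma cliq (hA : G.IsDeltaClass A) (hx : x ∉ ELGraph.span A)
    (hallO : ∀ s ∈ ELGraph.span A, G.Ovl x s) :
    ∀ s ∈ ELGraph.span A, ∀ t ∈ ELGraph.span A, G.Adj s t := by
  intro s hs t ht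
  obtain ⟨p, hp, hsp⟩ := hs
  obtain ⟨q, hq, htq⟩ := ht
  obtain ⟨k, hk, P, Q, hP, hQ, hP0, hQ0, hPk, hQk, hW⟩ := hA.2.1 p hp q hq
  have hmid : ∀ i ≤ k, (P i, Q i) ∈ A := mid_mem hA hp hq hP hQ hP0 hQ0 hPk hQk hW
  have hOx : G.Ovl x s := hallO s ⟨p, hp, hsp⟩
  have base : G.Adj s p.1 ∧ G.Adj s p.2 := by
    rcases hsp with rfl | rfl
    · refine ⟨G.refl _, ?_⟩
      by_contra h2
      exact L3 hA hx (show ((p.1 : V), (p.2 : V)) ∈ A from hp) (G.refl _) h2 hOx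
        (hallO p.2 ⟨p, hp, Or.inr rfl⟩)
    · refine ⟨?_, G.refl _⟩
      by_contra h2
      exact L3' hA hx (show ((p.1 : V), (p.2 : V)) ∈ A from hp) (G.refl _) h2 hOx
        (hallO p.1 ⟨p, hp, Or.inl rfl⟩)
  have claim : ∀ i, i ≤ k → G.Adj s (P i) ∧ G.Adj s (Q i) := by
    intro i
    induction i with
    | zero => intro _; rw [hP0, hQ0]; exact base
    | succ n ih =>
      intro hnk
      have hn : n ≤ k := by omega
      have hnk' : n < k := by omega
      obtain ⟨iP, iQ⟩ := ih hn
      have hQn1 : G.Adj s (Q (n+1)) := by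
        by_contra h2
        exact L4 hA hx (hmid n hn) (hQ n hnk') (hW n hnk').1 iP h2 hOx
          (hallO (Q (n+1)) ⟨(P (n+1), Q (n+1)), hmid (n+1) hnk, Or.inr rfl⟩)
      have hPn1 : G.Adj s (P (n+1)) := by
        by_contra h2
        exact L3' hA hx (hmid (n+1) hnk) hQn1 h2 hOx
          (hallO (P (n+1)) ⟨(P (n+1), Q (n+1)), hmid (n+1) hnk, Or.inl rfl⟩)
      exact ⟨hPn1, hQn1⟩
  have hck := claim k le_rfl
  rw [hPk, hQk] at hck
  rcases htq with rfl | rfl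
  · exact hck.1
  · exact hck.2

end WithClass

end DeltaAux

/-- For a Δ-implication class `A`: (1) any Δ-module containing both
coordinates of some pair of `A` contains `span A`; (2) `span A` is a Δ-module. -/
theorem deltaClass_span_module
    {V : Type} [Fintype V] (G : ELGraph V) (A : Set (V × V))
    (hA : G.IsDeltaClass A) :
    (∀ F : Set V, G.IsDeltaModule F → ∀ a b : V, a ∈ F → b ∈ F → (a, b) ∈ A →
      ELGraph.span A ⊆ F) ∧
    G.IsDeltaModule (ELGraph.span A) := by
  constructor
  · -- Part 1
    rintro F ⟨hFne, hFalt, hFcl⟩ a b ha hb hab v ⟨p, hp, hv⟩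
    obtain ⟨k, hk, P, Q, hP, hQ, hP0, hQ0, hPk, hQk, hW⟩ := hA.2.1 (a,b) hab p hp
    have claim : ∀ i, i ≤ k → P i ∈ F ∧ Q i ∈ F := by
      intro i
      induction i with
      | zero => intro _; rw [hP0, hQ0]; exact ⟨ha, hb⟩
      | succ n ih =>
        intro hnk
        obtain ⟨hPF, hQF⟩ := ih (by omega)
        have hPadj := hP n (by omega)
        have hQadj := hQ n (by omega)
        have hW1 := (hW n (by omega)).1
        have hW2 := (hW n (by omega)).2
        have hQn1 : Q (n+1) ∈ F := by
          by_contra hQ1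
          rcases hFalt _ hQ1 with hnone | hincl | hovl
          · exact hnone _ hQF (G.symm _ _ hQadj)
          · exact (hincl _ hPF).2 (hW2.1 (hincl _ hPF).1)
          · have hclq : G.IsClique F := by
              by_contra hncl
              exact hFcl hncl _ hQ1 _ hQF (hovl _ hQF)
            have hxy : G.Ovl (P n) (Q n) := hW1.1 (hclq _ hPF _ hQF)
            exact hW1.2.2 hxy (G.ovl_symm _ _ (hovl _ hPF)) (G.ovl_symm _ _ (hovl _ hQF))
        have hPn1 : P (n+1) ∈ F := by
          by_contra hP1
          rcases hFalt _ hP1 with hnone | hincl | hovl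
          · exact hnone _ hPF (G.symm _ _ hPadj)
          · exact (hincl _ hQn1).2
              (G.ovl_symm _ _ (hW2.2.1 (G.symm _ _ (hincl _ hQn1).1)))
          · have hclq : G.IsClique F := by
              by_contra hncl
              exact hFcl hncl _ hP1 _ hPF (hovl _ hPF)
            have h1 : G.Ovl (Q (n+1)) (P n) := hW2.1 (hclq _ hQn1 _ hPF)
            exact hW2.2.2 h1 (G.ovl_symm _ _ (hovl _ hQn1)) (G.ovl_symm _ _ (hovl _ hPF))
        exact ⟨hPn1, hQn1⟩
    have hck := claim k le_rfl
    rw [hPk, hQk] at hck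
    rcases hv with rfl | rfl
    · exact hck.1
    · exact hck.2
  · -- Part 2
    obtain ⟨p0, hp0⟩ := hA.1
    have hsp0 : p0.1 ∈ ELGraph.span A := ⟨p0, hp0, Or.inl rfl⟩
    refine ⟨⟨p0.1, hsp0⟩, ?_, ?_⟩
    · intro x hx
      by_cases hadj : G.Adj x p0.1
      · by_cases hovl : G.Ovl x p0.1
        · right; right
          intro s hs
          exact ((DeltaAux.uniform hA hx hsp0 hs).2).1 hovl
        · right; left
          intro s hs
          have hT := DeltaAux.uniform hA hx hsp0 hs
          exact ⟨hT.1.1 hadj, fun ho => hovl (hT.2.2 ho)⟩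
      · left
        intro s hs hadjs
        exact hadj ((DeltaAux.uniform hA hx hsp0 hs).1.2 hadjs)
    · intro hncl x hx s hs hovl
      have hallO : ∀ t ∈ ELGraph.span A, G.Ovl x t := by
        intro t ht
        exact ((DeltaAux.uniform hA hx hs ht).2).1 hovl
      exact hncl (DeltaAux.cliq hA hx hallO)
end

section
/- Let G be an edge-labelled graph in which every Δ-module is trivial, and suppose G has at least one overlap edge or at least one non-edge (non-adjacent pair of distinct vertices). Then either G has exactly two Δ-implication classes A and A⁻¹ with A ≠ A⁻¹, or G has exactly one Δ-implication class A with A = A⁻¹. -/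
/-!
Relatedness of ordered pairs is the equivalence relation generated by moving one
coordinate of a pair along an edge, pivoting at the other coordinate, while keeping both pairs
non-edges or overlap edges and avoiding a triangle of overlap edges; so the Δ-classes are the
classes of this relation on such pairs.  Fix one class `A`.  A vertex outside the span of `A`
sees both ends of every pair of `A` alike, so the span is a Δ-module and hence all of `V`.
Call a pair foreign if it is a non-edge or overlap edge lying in neither `A` nor `A⁻¹`.
Propagating along `A` and using that `A` spans `V`, no vertex is foreign to both ends of a pair
of `A ∪ A⁻¹`, so no path of foreign pairs joins the ends of such a pair.  Consequently the
vertices joined to `a` by foreign paths form a Δ-module; if `ab` were foreign this module would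
contain `a ≠ b` yet miss every partner of `a` in `A ∪ A⁻¹`.  So `A ∪ A⁻¹` contains every
non-edge and overlap edge, and `A` and `A⁻¹` are the only classes.
-/

namespace ELGraph

open Relation Set

variable {V : Type}

def NonIncl (G : ELGraph V) (a b : V) : Prop := G.Adj a b → G.Ovl a b

def Pivot (G : ELGraph V) (c x y : V) : Prop := G.AvoidsEdge c x y ∧ G.Adj x y

/-- A step of two mutually avoiding walks in which one of the walks stands still. -/
def Move (G : ELGraph V) (p q : V × V) : Prop :=
  (p.1 = q.1 ∧ G.Pivot p.1 p.2 q.2) ∨ (p.2 = q.2 ∧ G.Pivot p.2 p.1 q.1)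

def SeesAlike (G : ELGraph V) (x u v : V) : Prop :=
  (G.Adj x u ↔ G.Adj x v) ∧ (G.Ovl x u ↔ G.Ovl x v)

/-- `ab` lies in `A ∪ A⁻¹`, where `A` is the Δ-class of `p₀`. -/
def InColorClass (G : ELGraph V) (p₀ : V × V) (a b : V) : Prop :=
  ReflTransGen G.Move p₀ (a, b) ∨ ReflTransGen G.Move p₀ (b, a)

def Foreign (G : ELGraph V) (p₀ : V × V) (a b : V) : Prop :=
  G.NonIncl a b ∧ ¬ G.InColorClass p₀ a b

def IsDeltaPrime (G : ELGraph V) : Prop := ∀ S : Set V, G.IsDeltaModule S → TrivialModule S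

variable {G : ELGraph V} {a b c s u v x y z : V} {p q r : V × V}

lemma NonIncl.ne (h : G.NonIncl a b) : a ≠ b := by
  rintro rfl
  exact G.ovl_irrefl a (h (G.refl a))

lemma NonIncl.symm (h : G.NonIncl a b) : G.NonIncl b a :=
  fun hba => G.ovl_symm _ _ (h (G.symm _ _ hba))

lemma AvoidsEdge.symm (h : G.AvoidsEdge z a b) : G.AvoidsEdge z b a :=
  ⟨h.2.1, h.1, fun hb ha hab => h.2.2 ha hb (G.ovl_symm _ _ hab)⟩

lemma avoidsEdge_self (h : G.NonIncl z a) : G.AvoidsEdge z a a :=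
  ⟨h, h, fun _ _ => G.ovl_irrefl a⟩

lemma Pivot.symm (h : G.Pivot c x y) : G.Pivot c y x :=
  ⟨h.1.symm, G.symm _ _ h.2⟩

lemma pivot_of_not_adj (hcx : G.NonIncl c x) (hcy : ¬ G.Adj c y) (hxy : G.Adj x y) :
    G.Pivot c x y :=
  ⟨⟨hcx, fun h => absurd h hcy, fun _ h => absurd (G.ovl_adj _ _ h) hcy⟩, hxy⟩

lemma Move.symm (h : G.Move p q) : G.Move q p := by
  rcases h with ⟨h₁, h⟩ | ⟨h₂, h⟩
  · exact Or.inl ⟨h₁.symm, h₁ ▸ h.symm⟩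
  · exact Or.inr ⟨h₂.symm, h₂ ▸ h.symm⟩

instance : Std.Symm G.Move := ⟨fun _ _ => Move.symm⟩

lemma Move.swap (h : G.Move p q) : G.Move p.swap q.swap :=
  Or.symm h

lemma Move.nonIncl (h : G.Move p q) : G.NonIncl q.1 q.2 := by
  rcases h with ⟨h₁, h⟩ | ⟨h₂, h⟩
  · exact h₁ ▸ h.1.2.1
  · exact h₂ ▸ NonIncl.symm h.1.2.1

lemma Move.step (h : G.Move p q) :
    G.Adj p.1 q.1 ∧ G.Adj p.2 q.2 ∧ G.AvoidsEdge p.1 p.2 q.2 ∧ G.AvoidsEdge q.2 p.1 q.1 := by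
  rcases h with ⟨h₁, h⟩ | ⟨h₂, h⟩
  · rw [← h₁]
    exact ⟨G.refl _, h.2, h.1, avoidsEdge_self (NonIncl.symm h.1.2.1)⟩
  · rw [← h₂]
    exact ⟨h.2, G.refl _, avoidsEdge_self (NonIncl.symm h.1.1), h.1⟩

lemma reflTransGen_move_of_step {a' b' : V} (ha : G.Adj a a') (hb : G.Adj b b')
    (h₁ : G.AvoidsEdge a b b') (h₂ : G.AvoidsEdge b' a a') :
    ReflTransGen G.Move (a, b) (a', b') :=
  ReflTransGen.tail (.single (b := (a, b')) (Or.inl ⟨rfl, h₁, hb⟩))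
    (Or.inr ⟨rfl, h₂, ha⟩)

lemma nonIncl_of_reflTransGen_move (hp : G.NonIncl p.1 p.2) (h : ReflTransGen G.Move p q) :
    G.NonIncl q.1 q.2 := by
  cases h with
  | refl => exact hp
  | tail _ hm => exact hm.nonIncl

lemma move_of_pivot_snd (hp : G.Pivot q.1 q.2 y) : G.Move q (q.1, y) :=
  Or.inl ⟨rfl, hp⟩

lemma move_of_pivot_fst (hp : G.Pivot q.2 q.1 y) : G.Move q (y, q.2) :=
  Or.inr ⟨rfl, hp⟩

lemma reflTransGen_move_swap (h : ReflTransGen G.Move p q) :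
    ReflTransGen G.Move p.swap q.swap :=
  ReflTransGen.lift Prod.swap (fun _ _ => Move.swap) _ _ h

lemma related_self (h : G.NonIncl p.1 p.2) : G.Related p p :=
  ⟨1, one_pos, fun _ => p.1, fun _ => p.2, fun _ _ => G.refl _, fun _ _ => G.refl _,
    rfl, rfl, rfl, rfl, fun _ _ => ⟨avoidsEdge_self h, avoidsEdge_self h.symm⟩⟩

lemma Related.cons (hm : G.Move p r) (h : G.Related r q) : G.Related p q := by
  obtain ⟨k, -, P, Q, hP, hQ, hP0, hQ0, hPk, hQk, hPQ⟩ := h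
  obtain ⟨h₁, h₂, h₃, h₄⟩ := hm.step
  simp only [← hP0, ← hQ0] at h₁ h₂ h₃ h₄
  refine ⟨k + 1, k.succ_pos, fun | 0 => p.1 | i + 1 => P i, fun | 0 => p.2 | i + 1 => Q i,
    ?_, ?_, rfl, rfl, hPk, hQk, ?_⟩ <;> rintro (_ | i) hi
  · exact h₁
  · exact hP i (by omega)
  · exact h₂
  · exact hQ i (by omega)
  · exact ⟨h₃, h₄⟩
  · exact hPQ i (by omega)

theorem related_iff : G.Related p q ↔ G.NonIncl p.1 p.2 ∧ ReflTransGen G.Move p q := by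
  constructor
  · rintro ⟨k, hk, P, Q, hP, hQ, hP0, hQ0, hPk, hQk, hPQ⟩
    refine ⟨hP0 ▸ hQ0 ▸ (hPQ 0 hk).1.1, ?_⟩
    have hstep : ∀ i ≤ k, ReflTransGen G.Move (P 0, Q 0) (P i, Q i) := by
      intro i hi
      induction i with
      | zero => exact .refl
      | succ i ih =>
        exact (ih (by omega)).trans (reflTransGen_move_of_step (hP i (by omega))
          (hQ i (by omega)) (hPQ i (by omega)).1 (hPQ i (by omega)).2)
    simpa only [hP0, hQ0, hPk, hQk] using hstep k le_rfl
  · rintro ⟨hp, h⟩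
    induction h using ReflTransGen.head_induction_on with
    | refl => exact related_self hp
    | head hm _ ih => exact Related.cons hm (ih (Move.nonIncl hm))

theorem isDeltaClass_setOf_reflTransGen_move (hp : G.NonIncl p.1 p.2) :
    G.IsDeltaClass {q | ReflTransGen G.Move p q} := by
  refine ⟨⟨p, .refl⟩, fun q hq r hr => ?_, fun B hB hrel => ?_⟩
  · exact related_iff.2 ⟨nonIncl_of_reflTransGen_move hp hq, (_root_.symm hq).trans hr⟩
  · exact (hB.antisymm fun r hr => (related_iff.1 (hrel p (hB .refl) r hr)).2).symm

lemma IsDeltaClass.nonIncl {A : Set (V × V)} (hA : G.IsDeltaClass A) (hp : p ∈ A) :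
    G.NonIncl p.1 p.2 :=
  (related_iff.1 (hA.2.1 p hp p hp)).1

theorem IsDeltaClass.eq_setOf_reflTransGen_move {A : Set (V × V)} (hA : G.IsDeltaClass A)
    (hp : p ∈ A) : A = {q | ReflTransGen G.Move p q} :=
  (hA.2.2 _ (fun q hq => (related_iff.1 (hA.2.1 p hp q hq)).2)
    (isDeltaClass_setOf_reflTransGen_move (hA.nonIncl hp)).2.1).symm

lemma setOf_reflTransGen_move_eq (h : ReflTransGen G.Move p q) :
    {r | ReflTransGen G.Move p r} = {r | ReflTransGen G.Move q r} :=
  Set.ext fun _ => ⟨((_root_.symm h).trans ·), h.trans⟩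

lemma inv_setOf_reflTransGen_move (p : V × V) :
    inv {q | ReflTransGen G.Move p q} = {q | ReflTransGen G.Move p.swap q} :=
  Set.ext fun _ => ⟨reflTransGen_move_swap, reflTransGen_move_swap⟩

lemma isDeltaModule_of_seesAlike {S : Set V} (ha : a ∈ S)
    (halike : ∀ x ∉ S, ∀ s ∈ S, G.SeesAlike x s a)
    (hovl : ¬ G.IsClique S → ∀ x ∉ S, ∀ s ∈ S, ¬ G.Ovl x s) : G.IsDeltaModule S := by
  refine ⟨⟨a, ha⟩, fun x hx => ?_, hovl⟩
  by_cases hadj : G.Adj x a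
  · by_cases hxa : G.Ovl x a
    · exact Or.inr (Or.inr fun s hs => (halike x hx s hs).2.2 hxa)
    · exact Or.inr (Or.inl fun s hs =>
        ⟨(halike x hx s hs).1.2 hadj, fun h => hxa ((halike x hx s hs).2.1 h)⟩)
  · exact Or.inl fun s hs h => hadj ((halike x hx s hs).1.1 h)

lemma IsDeltaPrime.eq_univ (hG : G.IsDeltaPrime) {S : Set V} (hS : G.IsDeltaModule S)
    (ha : a ∈ S) (hb : b ∈ S) (hab : a ≠ b) : S = univ := by
  rcases hG S hS with h | ⟨c, rfl⟩
  · exact h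
  · exact absurd (ha.trans hb.symm) hab

lemma seesAlike_equivalence (x : V) : Equivalence (G.SeesAlike x) :=
  ⟨fun _ => ⟨Iff.rfl, Iff.rfl⟩, fun h => ⟨h.1.symm, h.2.symm⟩,
    fun h h' => ⟨h.1.trans h'.1, h.2.trans h'.2⟩⟩

lemma adj_ovl_of_not_pivot (huv : G.NonIncl u v) (h : ¬ G.Pivot u v x) :
    (G.Adj x v → G.Adj x u) ∧ (G.Ovl x u → G.Adj x v → G.Ovl x v) := by
  refine ⟨fun hxv => ?_, fun hxu hxv => ?_⟩
  · by_contra hxu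
    exact h (pivot_of_not_adj huv (fun hux => hxu (G.symm _ _ hux)) (G.symm _ _ hxv))
  · by_contra hn
    exact h ⟨⟨huv, fun _ => G.ovl_symm _ _ hxu, fun _ _ hvx => hn (G.ovl_symm _ _ hvx)⟩,
      G.symm _ _ hxv⟩

lemma seesAlike_of_not_pivot (huv : G.NonIncl u v) (h₁ : ¬ G.Pivot u v x)
    (h₂ : ¬ G.Pivot v u x) : G.SeesAlike x u v := by
  obtain ⟨hvu, hov⟩ := adj_ovl_of_not_pivot huv h₁
  obtain ⟨huv', hov'⟩ := adj_ovl_of_not_pivot (NonIncl.symm huv) h₂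
  exact ⟨⟨huv', hvu⟩, fun h => hov h (huv' (G.ovl_adj _ _ h)),
    fun h => hov' h (hvu (G.ovl_adj _ _ h))⟩

variable {p₀ : V × V}

lemma rel_fst_of_mem_span {E : V → V → Prop} (hE : Equivalence E)
    (hpair : ∀ q, ReflTransGen G.Move p₀ q → E q.1 q.2) {s : V}
    (hs : s ∈ span {q | ReflTransGen G.Move p₀ q}) : E s p₀.1 := by
  have hfst : ∀ q, ReflTransGen G.Move p₀ q → E q.1 p₀.1 := by
    intro q hq
    induction hq with
    | refl => exact hE.refl _
    | @tail q r hq hm ih =>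
      have hr := hq.tail hm
      rcases hm with ⟨h₁, -⟩ | ⟨h₂, -⟩
      · exact h₁ ▸ ih
      · exact hE.trans (h₂ ▸ hpair r hr) (hE.trans (hE.symm (hpair q hq)) ih)
  obtain ⟨q, hq, rfl | rfl⟩ := hs
  · exact hfst q hq
  · exact hE.trans (hE.symm (hpair q hq)) (hfst q hq)

lemma seesAlike_of_not_mem_span (h₀ : G.NonIncl p₀.1 p₀.2)
    (hx : x ∉ span {q | ReflTransGen G.Move p₀ q})
    (hs : s ∈ span {q | ReflTransGen G.Move p₀ q}) :
    G.SeesAlike x s p₀.1 :=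
  rel_fst_of_mem_span (seesAlike_equivalence x) (fun _ hq =>
    seesAlike_of_not_pivot (nonIncl_of_reflTransGen_move h₀ hq)
      (fun hp => hx ⟨_, hq.tail (move_of_pivot_snd hp), Or.inr rfl⟩)
      (fun hp => hx ⟨_, hq.tail (move_of_pivot_fst hp), Or.inl rfl⟩)) hs

lemma isClique_span_of_forall_adj (h₀ : G.NonIncl p₀.1 p₀.2)
    (hadj : ∀ q, ReflTransGen G.Move p₀ q → G.Adj q.1 q.2) :
    G.IsClique (span {q | ReflTransGen G.Move p₀ q}) := by
  have hnbhd : ∀ q, ReflTransGen G.Move p₀ q → G.nbhd q.1 = G.nbhd q.2 := by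
    intro q hq
    have hq' := nonIncl_of_reflTransGen_move h₀ hq
    ext y
    refine ⟨fun hy => ?_, fun hy => ?_⟩
    · by_contra hn
      exact hn (G.symm _ _ (hadj _
        (hq.tail (move_of_pivot_fst (pivot_of_not_adj (NonIncl.symm hq') hn hy)))))
    · by_contra hn
      exact hn (hadj _ (hq.tail (move_of_pivot_snd (pivot_of_not_adj hq' hn hy))))
  intro a ha b hb
  have hE : Equivalence fun u v : V => G.nbhd u = G.nbhd v := ⟨fun _ => rfl, Eq.symm, Eq.trans⟩
  have hab : G.nbhd a = G.nbhd b :=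
    (rel_fst_of_mem_span hE hnbhd ha).trans (rel_fst_of_mem_span hE hnbhd hb).symm
  show b ∈ G.nbhd a
  exact hab ▸ G.refl b

lemma isDeltaModule_span (h₀ : G.NonIncl p₀.1 p₀.2) :
    G.IsDeltaModule (span {q | ReflTransGen G.Move p₀ q}) := by
  refine isDeltaModule_of_seesAlike ⟨p₀, .refl, Or.inl rfl⟩
    (fun x hx s hs => seesAlike_of_not_mem_span h₀ hx hs) fun hnc x hx s hs hxs => ?_
  have hovl : ∀ t ∈ span {q | ReflTransGen G.Move p₀ q}, G.Ovl x t := fun t ht =>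
    (seesAlike_of_not_mem_span h₀ hx ht).2.2 ((seesAlike_of_not_mem_span h₀ hx hs).2.1 hxs)
  by_cases hadj : ∀ q, ReflTransGen G.Move p₀ q → G.Adj q.1 q.2
  · exact hnc (isClique_span_of_forall_adj h₀ hadj)
  · push Not at hadj
    obtain ⟨q, hq, hn⟩ := hadj
    have hp : G.Pivot q.1 q.2 x :=
      (pivot_of_not_adj (fun _ => G.ovl_symm _ _ (hovl _ ⟨q, hq, Or.inl rfl⟩)) hn
        (G.ovl_adj _ _ (hovl _ ⟨q, hq, Or.inr rfl⟩))).symm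
    exact hx ⟨_, hq.tail (move_of_pivot_snd hp), Or.inr rfl⟩

lemma IsDeltaPrime.span_eq_univ (hG : G.IsDeltaPrime) (h₀ : G.NonIncl p₀.1 p₀.2) :
    span {q | ReflTransGen G.Move p₀ q} = univ :=
  hG.eq_univ (isDeltaModule_span h₀) ⟨p₀, .refl, Or.inl rfl⟩ ⟨p₀, .refl, Or.inr rfl⟩
    h₀.ne

lemma IsDeltaPrime.exists_inColorClass (hG : G.IsDeltaPrime) (h₀ : G.NonIncl p₀.1 p₀.2)
    (z : V) : ∃ w, G.InColorClass p₀ z w := by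
  have hz : z ∈ span {q | ReflTransGen G.Move p₀ q} := hG.span_eq_univ h₀ ▸ mem_univ z
  obtain ⟨q, hq, rfl | rfl⟩ := hz
  exacts [⟨q.2, Or.inl hq⟩, ⟨q.1, Or.inr hq⟩]

lemma InColorClass.symm (h : G.InColorClass p₀ a b) : G.InColorClass p₀ b a :=
  Or.symm h

lemma InColorClass.nonIncl (h₀ : G.NonIncl p₀.1 p₀.2) (h : G.InColorClass p₀ a b) :
    G.NonIncl a b := by
  rcases h with h | h
  · exact nonIncl_of_reflTransGen_move h₀ h
  · exact NonIncl.symm (nonIncl_of_reflTransGen_move h₀ h)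

lemma InColorClass.pivot (h : G.InColorClass p₀ c x) (hp : G.Pivot c x y) :
    G.InColorClass p₀ c y := by
  rcases h with h | h
  · exact Or.inl (h.tail (move_of_pivot_snd hp))
  · exact Or.inr (h.tail (move_of_pivot_fst hp))

lemma Foreign.symm (h : G.Foreign p₀ a b) : G.Foreign p₀ b a :=
  ⟨NonIncl.symm h.1, fun h' => h.2 h'.symm⟩

instance : Std.Symm (G.Foreign p₀) := ⟨fun _ _ => Foreign.symm⟩

lemma InColorClass.triangle_of_foreign (h₀ : G.NonIncl p₀.1 p₀.2)
    (hcx : G.InColorClass p₀ c x) (hcy : G.Foreign p₀ c y) (hxy : G.Adj x y) :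
    G.Ovl c x ∧ G.Ovl c y ∧ G.Ovl x y := by
  by_contra h
  exact hcy.2 (hcx.pivot ⟨⟨hcx.nonIncl h₀, hcy.1, fun h₁ h₂ h₃ => h ⟨h₁, h₂, h₃⟩⟩, hxy⟩)

lemma Foreign.of_pivot (h₀ : G.NonIncl p₀.1 p₀.2) {v' : V} (hzu : G.Foreign p₀ z u)
    (hzv : G.Foreign p₀ z v) (huv : G.InColorClass p₀ u v) (hp : G.Pivot u v v') :
    G.Foreign p₀ z v' := by
  have huv' := huv.pivot hp
  refine ⟨fun hzv' => G.ovl_symm _ _ (huv'.triangle_of_foreign h₀ hzu.symm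
    (G.symm _ _ hzv')).2.2, fun hzv' => ?_⟩
  obtain ⟨hzv'ovl, hzvovl, hv'v⟩ := hzv'.triangle_of_foreign h₀ hzv (G.symm _ _ hp.2)
  have huvovl := (huv.triangle_of_foreign h₀ hzu.symm
    (G.symm _ _ (G.ovl_adj _ _ hzvovl))).1
  have huv'ovl := (huv'.triangle_of_foreign h₀ hzu.symm
    (G.symm _ _ (G.ovl_adj _ _ hzv'ovl))).1
  exact hp.1.2.2 huvovl huv'ovl (G.ovl_symm _ _ hv'v)

lemma IsDeltaPrime.not_foreign_of_inColorClass (hG : G.IsDeltaPrime)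
    (h₀ : G.NonIncl p₀.1 p₀.2) (hab : G.InColorClass p₀ a b) :
    ¬ (G.Foreign p₀ z a ∧ G.Foreign p₀ z b) := by
  wlog h : ReflTransGen G.Move p₀ (a, b) generalizing a b
  · exact fun h' => this hab.symm (hab.resolve_left h) h'.symm
  rintro ⟨hza, hzb⟩
  have hforeign : ∀ q, ReflTransGen G.Move (a, b) q →
      G.Foreign p₀ z q.1 ∧ G.Foreign p₀ z q.2 := by
    intro q hq
    induction hq with
    | refl => exact ⟨hza, hzb⟩
    | @tail r c hr hm ih =>
      have hr₀ : ReflTransGen G.Move p₀ r := h.trans hr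
      rcases hm with ⟨h₁, hp⟩ | ⟨h₂, hp⟩
      · exact ⟨h₁ ▸ ih.1, ih.1.of_pivot h₀ ih.2 (Or.inl hr₀) hp⟩
      · exact ⟨ih.2.of_pivot h₀ ih.1 (Or.inr hr₀) hp, h₂ ▸ ih.2⟩
  have hz : z ∈ span {q | ReflTransGen G.Move p₀ q} := hG.span_eq_univ h₀ ▸ mem_univ z
  obtain ⟨q, hq, rfl | rfl⟩ := hz
  · exact (hforeign q ((_root_.symm h).trans hq)).1.1.ne rfl
  · exact (hforeign q ((_root_.symm h).trans hq)).2.1.ne rfl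

lemma IsDeltaPrime.not_inColorClass_of_reflTransGen_foreign (hG : G.IsDeltaPrime)
    (h₀ : G.NonIncl p₀.1 p₀.2) (h : ReflTransGen (G.Foreign p₀) a b) :
    ¬ G.InColorClass p₀ a b := by
  induction h using ReflTransGen.head_induction_on with
  | refl => exact fun hbb => (hbb.nonIncl h₀).ne rfl
  | @head a c hac _ ih =>
    intro hab
    by_cases hcb : G.NonIncl c b
    · exact hG.not_foreign_of_inColorClass h₀ hab ⟨hac.symm, hcb, ih⟩
    · obtain ⟨hadj, hovl⟩ := Classical.not_imp.mp hcb
      exact hovl (G.ovl_symm _ _ (hab.triangle_of_foreign h₀ hac (G.symm _ _ hadj)).2.2)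

lemma seesAlike_of_foreign (huv : G.Foreign p₀ u v) (hux : ¬ G.Foreign p₀ u x)
    (hvx : ¬ G.Foreign p₀ v x) : G.SeesAlike x u v := by
  refine seesAlike_of_not_pivot huv.1 (fun hp => ?_) (fun hp => ?_)
  · exact huv.2 ((not_not.mp fun h => hux ⟨hp.1.2.1, h⟩).pivot hp.symm)
  · exact huv.2 ((not_not.mp fun h => hvx ⟨hp.1.2.1, h⟩).pivot hp.symm).symm

lemma IsDeltaPrime.isDeltaModule_foreign (hG : G.IsDeltaPrime) (h₀ : G.NonIncl p₀.1 p₀.2)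
    (a : V) : G.IsDeltaModule {x | ReflTransGen (G.Foreign p₀) a x} := by
  have hout : ∀ x ∉ {x | ReflTransGen (G.Foreign p₀) a x}, ∀ u,
      ReflTransGen (G.Foreign p₀) a u → ¬ G.Foreign p₀ u x :=
    fun x hx u hu h => hx (hu.tail h)
  have halike : ∀ x ∉ {x | ReflTransGen (G.Foreign p₀) a x}, ∀ s,
      ReflTransGen (G.Foreign p₀) a s → G.SeesAlike x s a := by
    intro x hx s hs
    induction hs with
    | refl => exact (seesAlike_equivalence x).refl a
    | @tail u v hu huv ih =>
      exact (seesAlike_equivalence x).trans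
        (seesAlike_of_foreign huv.symm (hout x hx v (hu.tail huv)) (hout x hx u hu)) ih
  refine isDeltaModule_of_seesAlike (a := a) .refl halike fun hnc x hx s hs hxs => ?_
  obtain ⟨u, hu, v, hv, huv⟩ : ∃ u ∈ {x | ReflTransGen (G.Foreign p₀) a x},
      ∃ v ∈ {x | ReflTransGen (G.Foreign p₀) a x}, ¬ G.Adj u v := by
    by_contra h
    push Not at h
    exact hnc h
  have hovl : ∀ t, ReflTransGen (G.Foreign p₀) a t → G.Ovl x t := fun t ht =>
    (halike x hx t ht).2.2 ((halike x hx s hs).2.1 hxs)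
  have hux : G.InColorClass p₀ u x :=
    not_not.mp fun h => hout x hx u hu ⟨fun _ => G.ovl_symm _ _ (hovl u hu), h⟩
  have huv' : G.Foreign p₀ u v := ⟨fun h => absurd h huv,
    hG.not_inColorClass_of_reflTransGen_foreign h₀ ((_root_.symm hu).trans hv)⟩
  exact huv (G.ovl_adj _ _ (hux.triangle_of_foreign h₀ huv' (G.ovl_adj _ _ (hovl v hv))).2.1)

theorem IsDeltaPrime.inColorClass_of_nonIncl (hG : G.IsDeltaPrime) (h₀ : G.NonIncl p₀.1 p₀.2)
    (hab : G.NonIncl a b) : G.InColorClass p₀ a b := by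
  by_contra hno
  obtain ⟨w, hw⟩ := hG.exists_inColorClass h₀ a
  have hT := hG.eq_univ (hG.isDeltaModule_foreign h₀ a) .refl (.single ⟨hab, hno⟩) hab.ne
  have haw : w ∈ {x | ReflTransGen (G.Foreign p₀) a x} := hT ▸ mem_univ w
  exact hG.not_inColorClass_of_reflTransGen_foreign h₀ haw hw

lemma IsDeltaClass.inv {A : Set (V × V)} (hA : G.IsDeltaClass A) : G.IsDeltaClass (inv A) := by
  obtain ⟨p, hp⟩ := hA.1
  rw [hA.eq_setOf_reflTransGen_move hp, inv_setOf_reflTransGen_move]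
  exact isDeltaClass_setOf_reflTransGen_move (NonIncl.symm (hA.nonIncl hp))

theorem IsDeltaPrime.eq_or_eq_inv (hG : G.IsDeltaPrime) {A B : Set (V × V)}
    (hA : G.IsDeltaClass A) (hB : G.IsDeltaClass B) : B = A ∨ B = inv A := by
  obtain ⟨p₀, hp₀⟩ := hA.1
  obtain ⟨p, hp⟩ := hB.1
  rw [hA.eq_setOf_reflTransGen_move hp₀, inv_setOf_reflTransGen_move,
    hB.eq_setOf_reflTransGen_move hp]
  rcases hG.inColorClass_of_nonIncl (hA.nonIncl hp₀) (hB.nonIncl hp) with h | h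
  · exact Or.inl (setOf_reflTransGen_move_eq h).symm
  · exact Or.inr (setOf_reflTransGen_move_eq (reflTransGen_move_swap h)).symm

end ELGraph

theorem deltaClasses_of_prime_general
    {V : Type} (G : ELGraph V)
    (hmod : ∀ S : Set V, G.IsDeltaModule S → ELGraph.TrivialModule S)
    (hne : (∃ u v, G.Ovl u v) ∨ (∃ u v : V, u ≠ v ∧ ¬ G.Adj u v)) :
    (∃ A, G.IsDeltaClass A ∧ ELGraph.inv A ≠ A ∧ G.IsDeltaClass (ELGraph.inv A) ∧
      ∀ B, G.IsDeltaClass B → B = A ∨ B = ELGraph.inv A) ∨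
    (∃ A, G.IsDeltaClass A ∧ ELGraph.inv A = A ∧ ∀ B, G.IsDeltaClass B → B = A) := by
  have hG : G.IsDeltaPrime := hmod
  obtain ⟨A, hA⟩ : ∃ A, G.IsDeltaClass A := by
    rcases hne with ⟨u, v, h⟩ | ⟨u, v, -, h⟩
    · exact ⟨_, ELGraph.isDeltaClass_setOf_reflTransGen_move (p := (u, v)) fun _ => h⟩
    · exact ⟨_, ELGraph.isDeltaClass_setOf_reflTransGen_move (p := (u, v)) (absurd · h)⟩
  by_cases hself : ELGraph.inv A = A
  · exact Or.inr ⟨A, hA, hself, fun B hB => (hG.eq_or_eq_inv hA hB).elim id (·.trans hself)⟩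
  · exact Or.inl ⟨A, hA, hself, hA.inv, fun B hB => hG.eq_or_eq_inv hA hB⟩

/-- If every Δ-module of `G` is trivial and `G` has an overlap edge or
a non-edge, then `G` has either exactly two Δ-implication classes `A ≠ A⁻¹`, or exactly
one Δ-implication class `A = A⁻¹`. -/
theorem deltaClasses_of_prime
    {V : Type} [Fintype V] (G : ELGraph V)
    (hmod : ∀ S : Set V, G.IsDeltaModule S → ELGraph.TrivialModule S)
    (hne : (∃ u v, G.Ovl u v) ∨ (∃ u v : V, u ≠ v ∧ ¬ G.Adj u v)) :
    (∃ A, G.IsDeltaClass A ∧ ELGraph.inv A ≠ A ∧ G.IsDeltaClass (ELGraph.inv A) ∧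
      ∀ B, G.IsDeltaClass B → B = A ∨ B = ELGraph.inv A) ∨
    (∃ A, G.IsDeltaClass A ∧ ELGraph.inv A = A ∧ ∀ B, G.IsDeltaClass B → B = A) :=
  deltaClasses_of_prime_general G hmod hne
end

section
/- An edge-labelled graph G has an interval ordering if and only if it has an interval representation consistent with its labelling. -/
/-!
Given a consistent representation, list the vertices by left endpoint, ties broken by
decreasing right endpoint: then a vertex after `a` but before a neighbour of `a` starts inside
the interval of `a`, and each forbidden pattern contradicts the endpoint inequalities.

Conversely, given an interval ordering, the neighbours of `u` that follow it form an initial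
segment ending at its rightmost neighbour. So `u` gets the interval from its position to the
position of its rightmost neighbour plus a fraction in `[0, 1)`. Vertices sharing the rightmost
neighbour form a clique, and their fractions must put overlap pairs in the order of the
ordering and inclusion pairs in reverse order; patterns (iv) and (v) make this transitive.
-/

open Finset Function OrderDual

section Intervals

variable {α : Type*} [LinearOrder α] {a b c d : α}

theorem Icc_inter_Icc_nonempty_iff_of_le (hcd : c ≤ d) (hac : a ≤ c) :
    (Set.Icc a b ∩ Set.Icc c d).Nonempty ↔ c ≤ b := by
  rw [Set.Icc_inter_Icc, Set.nonempty_Icc, sup_eq_right.2 hac, le_inf_iff, and_iff_left hcd]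

theorem Icc_overlap_iff_of_le (hab : a ≤ b) (hcd : c ≤ d) (hac : a ≤ c) :
    ((Set.Icc a b ∩ Set.Icc c d).Nonempty ∧
      ¬ Set.Icc a b ⊆ Set.Icc c d ∧ ¬ Set.Icc c d ⊆ Set.Icc a b) ↔
      c ≤ b ∧ a < c ∧ b < d := by
  rw [Icc_inter_Icc_nonempty_iff_of_le hcd hac, Set.Icc_subset_Icc_iff hab,
    Set.Icc_subset_Icc_iff hcd]
  grind

end Intervals

theorem exists_nat_lt_of_rel {α : Type*} [Finite α] (r : α → α → Prop) [IsStrictOrder α r] :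
    ∃ f : α → ℕ, ∀ a b, r a b → f a < f b := by
  classical
  have := Fintype.ofFinite α
  refine ⟨fun a => #{x | r x a}, fun a b hab => Finset.card_lt_card ?_⟩
  refine (Finset.ssubset_iff_of_subset fun x hx => ?_).2 ⟨a, ?_, ?_⟩
  · simp only [Finset.mem_filter, Finset.mem_univ, true_and] at hx ⊢
    exact _root_.trans hx hab
  · simpa using hab
  · simpa using irrefl a

theorem exists_mem_Ico_lt_of_rel {α : Type*} [Finite α] (r : α → α → Prop) [IsStrictOrder α r] :
    ∃ f : α → ℝ, (∀ a, f a ∈ Set.Ico 0 1) ∧ ∀ a b, r a b → f a < f b := by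
  obtain ⟨f, hf⟩ := exists_nat_lt_of_rel r
  refine ⟨fun a => f a / (f a + 1), fun a => ⟨by positivity, ?_⟩, fun a b hab => ?_⟩
  · rw [div_lt_one (by positivity)]
    linarith
  · have : (f a : ℝ) < f b := by exact_mod_cast hf a b hab
    rw [div_lt_div_iff₀ (by positivity) (by positivity)]
    linarith

theorem natCast_le_natCast_add_iff {m n : ℕ} {ε : ℝ} (hε : ε ∈ Set.Ico 0 1) :
    (m : ℝ) ≤ n + ε ↔ m ≤ n := by
  refine ⟨fun h => ?_, fun h => ?_⟩
  · by_contra! hnm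
    have : (n : ℝ) + 1 ≤ m := by exact_mod_cast hnm
    linarith [hε.2]
  · have : (m : ℝ) ≤ n := by exact_mod_cast h
    linarith [hε.1]

namespace ELGraph

variable {V : Type} {G : ELGraph V}

theorem adj_comm (G : ELGraph V) (u v : V) : G.Adj u v ↔ G.Adj v u :=
  ⟨G.symm u v, G.symm v u⟩

theorem ovl_comm (G : ELGraph V) (u v : V) : G.Ovl u v ↔ G.Ovl v u :=
  ⟨G.ovl_symm u v, G.ovl_symm v u⟩

section Representation

variable {l r : V → ℝ}

theorem IsConsistentIntervalRep.adj_iff (h : G.IsConsistentIntervalRep l r) {u v : V}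
    (huv : l u ≤ l v) : G.Adj u v ↔ l v ≤ r u := by
  rw [h.2.1, Icc_inter_Icc_nonempty_iff_of_le (h.1 v) huv]

theorem IsConsistentIntervalRep.ovl_iff (h : G.IsConsistentIntervalRep l r) {u v : V}
    (huv : l u ≤ l v) : G.Ovl u v ↔ l v ≤ r u ∧ l u < l v ∧ r u < r v := by
  rw [h.2.2, Icc_overlap_iff_of_le (h.1 u) (h.1 v) huv]

theorem isConsistentIntervalRep_of_lt [LinearOrder V] (hlr : ∀ v, l v ≤ r v) (hl : Monotone l)
    (hadj : ∀ u v, u < v → (G.Adj u v ↔ l v ≤ r u))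
    (hovl : ∀ u v, u < v → (G.Ovl u v ↔ l v ≤ r u ∧ l u < l v ∧ r u < r v)) :
    G.IsConsistentIntervalRep l r := by
  refine ⟨hlr, fun u v => ?_, fun u v => ?_⟩
  · rcases lt_trichotomy u v with huv | rfl | hvu
    · rw [Icc_inter_Icc_nonempty_iff_of_le (hlr v) (hl huv.le), hadj u v huv]
    · simpa [G.refl] using hlr u
    · rw [Set.inter_comm, Icc_inter_Icc_nonempty_iff_of_le (hlr u) (hl hvu.le), adj_comm,
        hadj v u hvu]
  · rcases lt_trichotomy u v with huv | rfl | hvu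
    · rw [Icc_overlap_iff_of_le (hlr u) (hlr v) (hl huv.le), hovl u v huv]
    · simp [G.ovl_irrefl]
    · rw [Set.inter_comm, and_comm (a := ¬ _), Icc_overlap_iff_of_le (hlr v) (hlr u) (hl hvu.le),
        ovl_comm, hovl v u hvu]

theorem IsConsistentIntervalRep.isIntervalOrdering [LinearOrder V]
    (h : G.IsConsistentIntervalRep l r) :
    G.IsIntervalOrdering ((· < ·) on fun v => toLex (l v, toLex (toDual (r v), v))) := by
  set key := fun v => toLex (l v, toLex (toDual (r v), v))
  have key_injective : Injective key := fun a b hab => by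
    simp only [key, toLex_inj, Prod.mk.injEq] at hab
    exact hab.2.2
  have key_lt {a b : V} (hab : key a < key b) : l a ≤ l b ∧ (l a = l b → r b ≤ r a) := by
    simp only [key, Prod.Lex.lt_iff, ofLex_toLex, toDual_lt_toDual, toDual_inj] at hab
    rcases hab with hab | ⟨hab, hr | ⟨hr, -⟩⟩
    · exact ⟨hab.le, fun h => absurd h hab.ne⟩
    · exact ⟨hab.le, fun _ => hr.le⟩
    · exact ⟨hab.le, fun _ => hr.ge⟩
  have incl {a b : V} (hab : key a < key b) (hi : G.InclEdge a b) : r b ≤ r a := by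
    obtain ⟨hl, hr⟩ := key_lt hab
    by_contra! hrb
    rcases hl.lt_or_eq with hl | hl
    · exact hi.2 ((h.ovl_iff hl.le).2 ⟨(h.adj_iff hl.le).1 hi.1, hl, hrb⟩)
    · exact (hr hl).not_gt hrb
  have ovl {a b : V} (hab : key a < key b) (ho : G.Ovl a b) : l a < l b ∧ r a < r b :=
    ((h.ovl_iff (key_lt hab).1).1 ho).2
  refine ⟨key_injective.isStrictTotalOrder_onFun (· < ·), ?_⟩
  rintro ⟨a, b, c, hab, hbc, hpat⟩
  have hlab := (key_lt hab).1
  have hlbc := (key_lt hbc).1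
  have hlac := hlab.trans hlbc
  rcases hpat with ⟨hnab, hac⟩ | ⟨hi, hnac, hbc'⟩ | ⟨ho, hac, hnbc⟩ | ⟨ho₁, ho₂, hi⟩ | ⟨hi₁, hi₂, ho⟩
  · rw [h.adj_iff hlab] at hnab
    rw [h.adj_iff hlac] at hac
    linarith
  · rw [h.adj_iff hlac] at hnac
    rw [h.adj_iff hlbc] at hbc'
    linarith [incl hab hi]
  · rw [h.adj_iff hlac] at hac
    rw [h.adj_iff hlbc] at hnbc
    linarith [ovl hab ho]
  · exact hi.2 ((h.ovl_iff hlac).2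
      ⟨(h.adj_iff hlac).1 hi.1, by linarith [ovl hab ho₁, ovl hbc ho₂],
        by linarith [ovl hab ho₁, ovl hbc ho₂]⟩)
  · have := ((h.ovl_iff hlac).1 ho).2.2
    linarith [incl hab hi₁, incl hbc hi₂]

theorem IsConsistentIntervalRep.exists_isIntervalOrdering (h : G.IsConsistentIntervalRep l r) :
    ∃ lt, G.IsIntervalOrdering lt :=
  letI := IsWellOrder.linearOrder (WellOrderingRel (α := V))
  ⟨_, h.isIntervalOrdering⟩

end Representation

section IntervalOrdering

variable [LinearOrder V] {a b c u v w : V}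

theorem IsIntervalOrdering.adj_of_lt_of_adj (hG : G.IsIntervalOrdering (· < ·)) (hab : a < b)
    (hbc : b < c) (hac : G.Adj a c) : G.Adj a b := by
  by_contra hn
  exact hG.2 ⟨a, b, c, hab, hbc, .inl ⟨hn, hac⟩⟩

theorem IsIntervalOrdering.adj_of_inclEdge (hG : G.IsIntervalOrdering (· < ·)) (hab : a < b)
    (hbc : b < c) (hi : G.InclEdge a b) (hbc' : G.Adj b c) : G.Adj a c := by
  by_contra hn
  exact hG.2 ⟨a, b, c, hab, hbc, .inr <| .inl ⟨hi, hn, hbc'⟩⟩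

theorem IsIntervalOrdering.adj_of_ovl (hG : G.IsIntervalOrdering (· < ·)) (hab : a < b)
    (hbc : b < c) (ho : G.Ovl a b) (hac : G.Adj a c) : G.Adj b c := by
  by_contra hn
  exact hG.2 ⟨a, b, c, hab, hbc, .inr <| .inr <| .inl ⟨ho, hac, hn⟩⟩

theorem IsIntervalOrdering.ovl_of_ovl_of_ovl (hG : G.IsIntervalOrdering (· < ·)) (hab : a < b)
    (hbc : b < c) (ho₁ : G.Ovl a b) (ho₂ : G.Ovl b c) (hac : G.Adj a c) : G.Ovl a c := by
  by_contra hn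
  exact hG.2 ⟨a, b, c, hab, hbc, .inr <| .inr <| .inr <| .inl ⟨ho₁, ho₂, hac, hn⟩⟩

theorem IsIntervalOrdering.not_ovl_of_inclEdge_of_inclEdge (hG : G.IsIntervalOrdering (· < ·))
    (hab : a < b) (hbc : b < c) (hi₁ : G.InclEdge a b) (hi₂ : G.InclEdge b c) : ¬ G.Ovl a c :=
  fun ho => hG.2 ⟨a, b, c, hab, hbc, .inr <| .inr <| .inr <| .inr ⟨hi₁, hi₂, ho⟩⟩

/-- In a representation built along the ordering, this is the order of right endpoints within a
clique of vertices with a common rightmost neighbour. -/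
def EndsBefore (G : ELGraph V) (u v : V) : Prop :=
  u < v ∧ G.Ovl u v ∨ v < u ∧ ¬ G.Ovl u v

theorem IsIntervalOrdering.endsBefore_trans (hG : G.IsIntervalOrdering (· < ·))
    (huv : G.Adj u v) (hvw : G.Adj v w) (huw : G.Adj u w)
    (h₁ : G.EndsBefore u v) (h₂ : G.EndsBefore v w) : G.EndsBefore u w := by
  -- A directed triangle of `EndsBefore` on `a < b < c` is exactly pattern (iv) or (v).
  have ovl : ∀ a b c, a < b → b < c → G.Ovl a b → G.Ovl b c → G.Adj a c → G.Ovl a c :=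
    fun _ _ _ => hG.ovl_of_ovl_of_ovl
  have incl : ∀ a b c, a < b → b < c → G.InclEdge a b → G.InclEdge b c → ¬ G.Ovl a c :=
    fun _ _ _ => hG.not_ovl_of_inclEdge_of_inclEdge
  have := G.ovl_symm
  have := G.symm
  unfold EndsBefore InclEdge at *
  grind

variable [Fintype V]

open Classical in
noncomputable def rightmostNbr (G : ELGraph V) (u : V) : V :=
  ({v | G.Adj u v} : Finset V).max' ⟨u, by simp [G.refl]⟩

theorem adj_rightmostNbr (G : ELGraph V) (u : V) : G.Adj u (G.rightmostNbr u) := by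
  classical
  simpa [rightmostNbr] using Finset.max'_mem ({v | G.Adj u v} : Finset V) ⟨u, by simp [G.refl]⟩

theorem le_rightmostNbr (h : G.Adj u v) : v ≤ G.rightmostNbr u := by
  classical
  simpa [rightmostNbr] using Finset.le_max' ({v | G.Adj u v} : Finset V) v (by simpa using h)

theorem IsIntervalOrdering.adj_iff_le_rightmostNbr (hG : G.IsIntervalOrdering (· < ·))
    (huv : u ≤ v) : G.Adj u v ↔ v ≤ G.rightmostNbr u := by
  refine ⟨le_rightmostNbr, fun hv => ?_⟩
  rcases huv.lt_or_eq with huv | rfl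
  · rcases hv.lt_or_eq with hv | hv
    · exact hG.adj_of_lt_of_adj huv hv (G.adj_rightmostNbr u)
    · exact hv ▸ G.adj_rightmostNbr u
  · exact G.refl u

theorem IsIntervalOrdering.rightmostNbr_le_of_ovl (hG : G.IsIntervalOrdering (· < ·))
    (huv : u < v) (ho : G.Ovl u v) : G.rightmostNbr u ≤ G.rightmostNbr v := by
  rcases le_or_gt (G.rightmostNbr u) v with h | h
  · exact h.trans (le_rightmostNbr (G.refl v))
  · exact le_rightmostNbr (hG.adj_of_ovl huv h ho (G.adj_rightmostNbr u))

theorem IsIntervalOrdering.rightmostNbr_le_of_inclEdge (hG : G.IsIntervalOrdering (· < ·))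
    (huv : u < v) (hi : G.InclEdge u v) : G.rightmostNbr v ≤ G.rightmostNbr u := by
  rcases le_or_gt (G.rightmostNbr v) v with h | h
  · exact h.trans (le_rightmostNbr hi.1)
  · exact le_rightmostNbr (hG.adj_of_inclEdge huv h hi (G.adj_rightmostNbr v))

theorem IsIntervalOrdering.adj_of_rightmostNbr_eq (hG : G.IsIntervalOrdering (· < ·))
    (h : G.rightmostNbr u = G.rightmostNbr v) : G.Adj u v := by
  rcases le_total u v with huv | hvu
  · exact (hG.adj_iff_le_rightmostNbr huv).2 (h ▸ le_rightmostNbr (G.refl v))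
  · exact G.symm v u ((hG.adj_iff_le_rightmostNbr hvu).2 (h ▸ le_rightmostNbr (G.refl u)))

theorem IsIntervalOrdering.isStrictOrder_endsBefore (hG : G.IsIntervalOrdering (· < ·)) :
    IsStrictOrder V fun u v => G.rightmostNbr u = G.rightmostNbr v ∧ G.EndsBefore u v where
  irrefl u h := by rcases h.2 with h | h <;> exact lt_irrefl u h.1
  trans u v w h₁ h₂ := ⟨h₁.1.trans h₂.1, hG.endsBefore_trans (hG.adj_of_rightmostNbr_eq h₁.1)
    (hG.adj_of_rightmostNbr_eq h₂.1) (hG.adj_of_rightmostNbr_eq (h₁.1.trans h₂.1)) h₁.2 h₂.2⟩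

theorem IsIntervalOrdering.exists_consistentIntervalRep_of_linearOrder
    (hG : G.IsIntervalOrdering (· < ·)) : ∃ l r : V → ℝ, G.IsConsistentIntervalRep l r := by
  obtain ⟨pos, hpos⟩ : ∃ pos : V → ℕ, StrictMono pos := exists_nat_lt_of_rel (· < ·)
  have := hG.isStrictOrder_endsBefore
  obtain ⟨ε, hε, hε_lt⟩ := exists_mem_Ico_lt_of_rel
    fun u v => G.rightmostNbr u = G.rightmostNbr v ∧ G.EndsBefore u v
  set r : V → ℝ := fun v => pos (G.rightmostNbr v) + ε v
  have hadj {u v : V} (huv : u ≤ v) : G.Adj u v ↔ (pos v : ℝ) ≤ r u := by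
    rw [hG.adj_iff_le_rightmostNbr huv, natCast_le_natCast_add_iff (hε u), hpos.le_iff_le]
  have hr_lt {u v : V} (h : G.rightmostNbr u ≤ G.rightmostNbr v)
      (heq : G.rightmostNbr u = G.rightmostNbr v → G.EndsBefore u v) : r u < r v := by
    rcases h.lt_or_eq with h | h
    · have : (pos (G.rightmostNbr u) : ℝ) + 1 ≤ pos (G.rightmostNbr v) := by
        exact_mod_cast hpos h
      linarith [(hε u).2, (hε v).1]
    · simp only [r, h]
      linarith [hε_lt u v ⟨h, heq h⟩]
  refine ⟨fun v => pos v, r, isConsistentIntervalRep_of_lt (fun v => (hadj le_rfl).1 (G.refl v))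
    (fun u v h => by exact_mod_cast hpos.monotone h) (fun u v huv => hadj huv.le) ?_⟩
  intro u v huv
  have hl : (pos u : ℝ) < pos v := by exact_mod_cast hpos huv
  by_cases hadj_uv : G.Adj u v
  · simp only [← hadj huv.le, hadj_uv, hl, true_and]
    refine ⟨fun ho => hr_lt (hG.rightmostNbr_le_of_ovl huv ho) fun _ => .inl ⟨huv, ho⟩,
      fun hr => by_contra fun hn => ?_⟩
    exact (hr_lt (hG.rightmostNbr_le_of_inclEdge huv ⟨hadj_uv, hn⟩)
      fun _ => .inr ⟨huv, (hn <| G.ovl_symm v u ·)⟩).not_gt hr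
  · simp only [← hadj huv.le, hadj_uv, false_and, iff_false]
    exact (hadj_uv <| G.ovl_adj u v ·)

end IntervalOrdering

theorem IsIntervalOrdering.exists_consistentIntervalRep [Fintype V] {lt : V → V → Prop}
    (h : G.IsIntervalOrdering lt) : ∃ l r : V → ℝ, G.IsConsistentIntervalRep l r := by
  classical
  have := h.1
  let := linearOrderOfSTO lt
  exact exists_consistentIntervalRep_of_linearOrder h

end ELGraph

/-- An edge-labelled graph has an interval ordering iff it has an
interval representation consistent with its labelling. -/
theorem intervalOrdering_iff_consistentRep
    {V : Type} [Fintype V] (G : ELGraph V) :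
    (∃ lt : V → V → Prop, G.IsIntervalOrdering lt) ↔
      (∃ l r : V → ℝ, G.IsConsistentIntervalRep l r) :=
  ⟨fun ⟨_, h⟩ => h.exists_consistentIntervalRep, fun ⟨_, _, h⟩ => h.exists_isIntervalOrdering⟩
end
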